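/- arXiv:1902.01165 — 5 statements merged into one kernel-verified Lean document; each statement's English description precedes it below -/
import Mathlib

section
/- In the bilinear RFIF setup, assume the vertical scaling factors {s_{ij}} are steady and have uniform sums {γ_rt} under a compatible partition B={B_r}_{r=1}^m. Then for all r,t with Λ_r∩Λ'_t≠∅ and all α,β∈{0,...,N−K} with [x_α,x_{α+K}]×[y_β,y_{β+K}]∈{D'_{ij} : (i,j)∈Λ_r∩Λ'_t}, one has Σ_{(i,j)∈Λ_r(α,β)} |S(u_i(x),v_j(y))| = γ_rt for every point (x,y)∈[x_α,x_{α+K}]×[y_β,y_{β+K}]. -/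
/- Bilinear recurrent fractal interpolation surfaces on [0,1]² (Liang–Ruan,
   "Construction and box dimension of recurrent fractal interpolation surfaces"). -/

noncomputable section
open Set Filter

namespace RFIS

/-- The grid point `x_i = i / N` (also used for `y_j = j / N`). -/
def xg (N i : ℕ) : ℝ := (i : ℝ) / (N : ℝ)

/-- The interval `I_i = [x_{i-1}, x_i]` (also `J_j`). -/
def Ii (N i : ℕ) : Set ℝ := Icc (xg N (i - 1)) (xg N i)

/-- The unit square `[0,1]²`. -/
def sq : Set (ℝ × ℝ) := Icc (0 : ℝ) 1 ×ˢ Icc (0 : ℝ) 1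

/-- The cell `D_{ij} = I_i × J_j`. -/
def Dij (N i j : ℕ) : Set (ℝ × ℝ) := Ii N i ×ˢ Ii N j

/-- The point `x'_i = x_{px i}` chosen from the grid. -/
def xp (N : ℕ) (px : ℕ → ℕ) (i : ℕ) : ℝ := xg N (px i)

/-- The interval `I'_i`, with endpoints `x'_{i-1}` and `x'_i`. -/
def Ii' (N : ℕ) (px : ℕ → ℕ) (i : ℕ) : Set ℝ := uIcc (xp N px (i - 1)) (xp N px i)

/-- The domain `D'_{ij} = I'_i × J'_j`. -/
def Dij' (N : ℕ) (px py : ℕ → ℕ) (i j : ℕ) : Set (ℝ × ℝ) := Ii' N px i ×ˢ Ii' N py j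

/-- The affine map `u_i : I'_i → I_i` with `u_i(x'_{i-1}) = x_{i-1}` and `u_i(x'_i) = x_i`
(also used for `v_j`). -/
def usub (N : ℕ) (px : ℕ → ℕ) (i : ℕ) (t : ℝ) : ℝ :=
  xg N (i - 1) + (t - xp N px (i - 1)) * ((xg N i - xg N (i - 1)) / (xp N px i - xp N px (i - 1)))

/-- `F` is bilinear on `E`: of the form `a + b x + c y + d x y` on `E`. -/
def IsBilinearOn (F : ℝ × ℝ → ℝ) (E : Set (ℝ × ℝ)) : Prop :=
  ∃ a b c d : ℝ, ∀ p ∈ E, F p = a + b * p.1 + c * p.2 + d * p.1 * p.2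

/-- The bilinear RFIF setup on `[0,1]²`: data `z_{ij}` on the uniform `N × N` grid
(`M = N`, `x_i = y_i = i/N`), vertical scaling factors `s_{ij}` with `|s_{ij}| < 1`,
the points `x'_i = x_{px i}`, `y'_j = y_{py j}` with `|I'_i| = K |I_i|`, `|J'_j| = K |J_j|`
and the domains `D'_{ij}` pairwise equal or with disjoint interiors; the functions `S`, `h`
bilinear on each cell with the prescribed grid values, the bilinear functions `g_{ij}` with
corner values `z'`, and the bilinear RFIF `f`: the continuous function interpolating the
data and satisfying `f(u_i x, v_j y) = S(u_i x, v_j y)(f(x,y) − g_{ij}(x,y)) + h(u_i x, v_j y)`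
on each `D'_{ij}`. -/
structure Setup where
  N : ℕ
  K : ℕ
  hN : 2 ≤ N
  hK : 2 ≤ K
  px : ℕ → ℕ
  py : ℕ → ℕ
  hpx : ∀ i ≤ N, px i ≤ N
  hpy : ∀ j ≤ N, py j ≤ N
  hKx : ∀ i, 1 ≤ i → i ≤ N → |xp N px i - xp N px (i - 1)| = (K : ℝ) * (xg N i - xg N (i - 1))
  hKy : ∀ j, 1 ≤ j → j ≤ N → |xp N py j - xp N py (j - 1)| = (K : ℝ) * (xg N j - xg N (j - 1))
  hdisj : ∀ i₁ j₁ i₂ j₂, 1 ≤ i₁ → i₁ ≤ N → 1 ≤ j₁ → j₁ ≤ N → 1 ≤ i₂ → i₂ ≤ N → 1 ≤ j₂ → j₂ ≤ N →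
    Dij' N px py i₁ j₁ = Dij' N px py i₂ j₂ ∨
      interior (Dij' N px py i₁ j₁) ∩ interior (Dij' N px py i₂ j₂) = ∅
  z : ℕ → ℕ → ℝ
  s : ℕ → ℕ → ℝ
  hs : ∀ i ≤ N, ∀ j ≤ N, |s i j| < 1
  S : ℝ × ℝ → ℝ
  hScont : ContinuousOn S sq
  hSbil : ∀ i j, 1 ≤ i → i ≤ N → 1 ≤ j → j ≤ N → IsBilinearOn S (Dij N i j)
  hSval : ∀ i ≤ N, ∀ j ≤ N, S (xg N i, xg N j) = s i j
  h : ℝ × ℝ → ℝ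
  hhcont : ContinuousOn h sq
  hhbil : ∀ i j, 1 ≤ i → i ≤ N → 1 ≤ j → j ≤ N → IsBilinearOn h (Dij N i j)
  hhval : ∀ i ≤ N, ∀ j ≤ N, h (xg N i, xg N j) = z i j
  g : ℕ → ℕ → ℝ × ℝ → ℝ
  hgbil : ∀ i j, 1 ≤ i → i ≤ N → 1 ≤ j → j ≤ N → IsBilinearOn (g i j) (Dij' N px py i j)
  hgval : ∀ i j, 1 ≤ i → i ≤ N → 1 ≤ j → j ≤ N →
    ∀ k ∈ ({i - 1, i} : Set ℕ), ∀ l ∈ ({j - 1, j} : Set ℕ),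
      g i j (xp N px k, xp N py l) = z (px k) (py l)
  f : ℝ × ℝ → ℝ
  hfcont : ContinuousOn f sq
  hfval : ∀ i ≤ N, ∀ j ≤ N, f (xg N i, xg N j) = z i j
  hfeq : ∀ i j, 1 ≤ i → i ≤ N → 1 ≤ j → j ≤ N → ∀ p ∈ Dij' N px py i j,
    f (usub N px i p.1, usub N py j p.2)
      = S (usub N px i p.1, usub N py j p.2) * (f p - g i j p)
        + h (usub N px i p.1, usub N py j p.2)

/-- The oscillation `O(f, E) = sup {f(x') − f(x'') : x', x'' ∈ E}`. -/
def Osc (f : ℝ × ℝ → ℝ) (E : Set (ℝ × ℝ)) : ℝ :=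
  sSup {d : ℝ | ∃ p ∈ E, ∃ q ∈ E, d = f p - f q}

/-- The dyadic-type square `Dⁿ_{kl} = [(k-1)/(KⁿN), k/(KⁿN)] × [(l-1)/(KⁿN), l/(KⁿN)]`. -/
def Dn (N K n k l : ℕ) : Set (ℝ × ℝ) :=
  Icc (((k : ℝ) - 1) / ((K : ℝ) ^ n * (N : ℝ))) ((k : ℝ) / ((K : ℝ) ^ n * (N : ℝ))) ×ˢ
    Icc (((l : ℝ) - 1) / ((K : ℝ) ^ n * (N : ℝ))) ((l : ℝ) / ((K : ℝ) ^ n * (N : ℝ)))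

open Classical in
/-- `O(f, n, U) = Σ { O(f, Dⁿ_{kl}) : Dⁿ_{kl} ⊆ U }`. -/
def OscSum (f : ℝ × ℝ → ℝ) (N K n : ℕ) (U : Set (ℝ × ℝ)) : ℝ :=
  ∑ k ∈ Finset.Icc 1 (K ^ n * N), ∑ l ∈ Finset.Icc 1 (K ^ n * N),
    if Dn N K n k l ⊆ U then Osc f (Dn N K n k l) else 0

/-- The `ε`-coordinate cube `∏_{i=1}^3 [k_i ε, (k_i+1) ε]` in `ℝ³`. -/
def cube (ε : ℝ) (k : ℤ × ℤ × ℤ) : Set (ℝ × ℝ × ℝ) :=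
  Icc ((k.1 : ℝ) * ε) (((k.1 : ℝ) + 1) * ε) ×ˢ
    Icc ((k.2.1 : ℝ) * ε) (((k.2.1 : ℝ) + 1) * ε) ×ˢ
      Icc ((k.2.2 : ℝ) * ε) (((k.2.2 : ℝ) + 1) * ε)

/-- `N_E(ε)`: the number of `ε`-coordinate cubes intersecting `E`. -/
def Ncubes (E : Set (ℝ × ℝ × ℝ)) (ε : ℝ) : ℕ :=
  {k : ℤ × ℤ × ℤ | (cube ε k ∩ E).Nonempty}.ncard

/-- `log N_E(ε) / log (1/ε)`. -/
def boxRatio (E : Set (ℝ × ℝ × ℝ)) (ε : ℝ) : ℝ :=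
  Real.log (Ncubes E ε) / Real.log (1 / ε)

/-- The upper box dimension `lim sup_{ε→0+} log N_E(ε) / log (1/ε)`. -/
def upperBoxDim (E : Set (ℝ × ℝ × ℝ)) : ℝ :=
  limsup (boxRatio E) (nhdsWithin 0 (Ioi 0))

/-- The lower box dimension `lim inf_{ε→0+} log N_E(ε) / log (1/ε)`. -/
def lowerBoxDim (E : Set (ℝ × ℝ × ℝ)) : ℝ :=
  liminf (boxRatio E) (nhdsWithin 0 (Ioi 0))

/-- The box dimension of `E` exists and equals `d`. -/
def HasBoxDim (E : Set (ℝ × ℝ × ℝ)) (d : ℝ) : Prop :=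
  Tendsto (boxRatio E) (nhdsWithin 0 (Ioi 0)) (nhds d)

/-- The graph `Γ f|_E = {(x, y, f(x,y)) : (x,y) ∈ E}`. -/
def graphOn (f : ℝ × ℝ → ℝ) (E : Set (ℝ × ℝ)) : Set (ℝ × ℝ × ℝ) :=
  (fun p : ℝ × ℝ => (p.1, p.2, f p)) '' E

/-- `B` is a partition of `[0,1]²`: nonempty sets covering `[0,1]²` with pairwise
disjoint interiors. -/
def IsPartition (m : ℕ) (B : Fin m → Set (ℝ × ℝ)) : Prop :=
  (∀ r, (B r).Nonempty) ∧ (⋃ r, B r) = sq ∧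
    ∀ r t, r ≠ t → interior (B r) ∩ interior (B t) = ∅

/-- The partition `B` is compatible with `{D_{ij}, D'_{ij}}`: every `D_{ij}` lies in some
`B_r` and every `D'_{ij}` in some `B_t`; and whenever some `(i,j)` has `D_{ij} ⊆ B_r` and
`D'_{ij} ⊆ B_t`, then `B_t = ⋃ {D'_{kl} : D_{kl} ⊆ B_r, D'_{kl} ⊆ B_t}`. -/
def IsCompatible (st : Setup) {m : ℕ} (B : Fin m → Set (ℝ × ℝ)) : Prop :=
  (∀ i j, 1 ≤ i → i ≤ st.N → 1 ≤ j → j ≤ st.N →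
    (∃ r, Dij st.N i j ⊆ B r) ∧ (∃ t, Dij' st.N st.px st.py i j ⊆ B t)) ∧
  (∀ r t : Fin m,
    (∃ i j, 1 ≤ i ∧ i ≤ st.N ∧ 1 ≤ j ∧ j ≤ st.N ∧
      Dij st.N i j ⊆ B r ∧ Dij' st.N st.px st.py i j ⊆ B t) →
    B t = ⋃ (k : ℕ) (l : ℕ)
      (_ : 1 ≤ k ∧ k ≤ st.N ∧ 1 ≤ l ∧ l ≤ st.N ∧
        Dij st.N k l ⊆ B r ∧ Dij' st.N st.px st.py k l ⊆ B t),
      Dij' st.N st.px st.py k l)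

/-- The index set `Σ_N × Σ_N = {1,…,N}²`. -/
def idxS (N : ℕ) : Finset (ℕ × ℕ) := Finset.Icc 1 N ×ˢ Finset.Icc 1 N

open Classical in
/-- `Λ_r = {(i,j) : D_{ij} ⊆ B_r}`. -/
def Lam (st : Setup) {m : ℕ} (B : Fin m → Set (ℝ × ℝ)) (r : Fin m) : Finset (ℕ × ℕ) :=
  (idxS st.N).filter fun ij => Dij st.N ij.1 ij.2 ⊆ B r

open Classical in
/-- `Λ'_t = {(i,j) : D'_{ij} ⊆ B_t}`. -/
def Lam' (st : Setup) {m : ℕ} (B : Fin m → Set (ℝ × ℝ)) (t : Fin m) : Finset (ℕ × ℕ) :=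
  (idxS st.N).filter fun ij => Dij' st.N st.px st.py ij.1 ij.2 ⊆ B t

/-- The rectangle `[x_α, x_{α+K}] × [y_β, y_{β+K}]`. -/
def rect (N K α β : ℕ) : Set (ℝ × ℝ) :=
  Icc (xg N α) (xg N (α + K)) ×ˢ Icc (xg N β) (xg N (β + K))

open Classical in
/-- `Λ_r(α,β) = {(i,j) ∈ Λ_r : D'_{ij} = [x_α, x_{α+K}] × [y_β, y_{β+K}]}`. -/
def LamAB (st : Setup) {m : ℕ} (B : Fin m → Set (ℝ × ℝ)) (r : Fin m) (α β : ℕ) :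
    Finset (ℕ × ℕ) :=
  (Lam st B r).filter fun ij => Dij' st.N st.px st.py ij.1 ij.2 = rect st.N st.K α β

/-- The vertical scaling factors are steady: for each cell, the four corner factors are
all nonnegative or all nonpositive. -/
def Steady (st : Setup) : Prop :=
  ∀ i j, 1 ≤ i → i ≤ st.N → 1 ≤ j → j ≤ st.N →
    (0 ≤ st.s (i - 1) (j - 1) ∧ 0 ≤ st.s (i - 1) j ∧ 0 ≤ st.s i (j - 1) ∧ 0 ≤ st.s i j) ∨
    (st.s (i - 1) (j - 1) ≤ 0 ∧ st.s (i - 1) j ≤ 0 ∧ st.s i (j - 1) ≤ 0 ∧ st.s i j ≤ 0)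

/-- The sum `Σ_{(i,j) ∈ Λ_r(α,β)} |S(u_i(x_a), v_j(y_b))|`. -/
def cSum (st : Setup) {m : ℕ} (B : Fin m → Set (ℝ × ℝ)) (r : Fin m) (α β a b : ℕ) : ℝ :=
  ∑ ij ∈ LamAB st B r α β,
    |st.S (usub st.N st.px ij.1 (xg st.N a), usub st.N st.py ij.2 (xg st.N b))|

/-- The vertical scaling factors have uniform sums `γ_{rt}` under the partition `B`:
whenever `Λ_r ∩ Λ'_t ≠ ∅` and `[x_α, x_{α+K}] × [y_β, y_{β+K}] ∈ {D'_{ij} : (i,j) ∈ Λ_r ∩ Λ'_t}`,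
the four corner sums `Σ_{(i,j) ∈ Λ_r(α,β)} |S(u_i(x_a), v_j(y_b))|`,
`(a,b) ∈ {α, α+K} × {β, β+K}`, all equal `γ_{rt}`. -/
def HasUniformSums (st : Setup) {m : ℕ} (B : Fin m → Set (ℝ × ℝ))
    (γ : Fin m → Fin m → ℝ) : Prop :=
  ∀ r t : Fin m, (Lam st B r ∩ Lam' st B t).Nonempty →
    ∀ α β : ℕ, α + st.K ≤ st.N → β + st.K ≤ st.N →
      (∃ ij ∈ Lam st B r ∩ Lam' st B t,
        Dij' st.N st.px st.py ij.1 ij.2 = rect st.N st.K α β) →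
      cSum st B r α β α β = γ r t ∧ cSum st B r α β (α + st.K) β = γ r t ∧
      cSum st B r α β α (β + st.K) = γ r t ∧ cSum st B r α β (α + st.K) (β + st.K) = γ r t

/-- `γ_{rt} = 0` whenever `Λ_r ∩ Λ'_t = ∅`. -/
def GammaZero (st : Setup) {m : ℕ} (B : Fin m → Set (ℝ × ℝ))
    (γ : Fin m → Fin m → ℝ) : Prop :=
  ∀ r t : Fin m, Lam st B r ∩ Lam' st B t = ∅ → γ r t = 0

/-- There is an `n`-path (for some `n ≥ 1`) from `t` to `r` in the matrix `γ`:
a sequence `i_0 = t, …, i_n = r` with `γ_{i_k, i_{k-1}} > 0` for `k = 1, …, n`. -/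
def IsPathFrom {m : ℕ} (γ : Fin m → Fin m → ℝ) (t r : Fin m) : Prop :=
  ∃ n : ℕ, 1 ≤ n ∧ ∃ c : ℕ → Fin m, c 0 = t ∧ c n = r ∧
    ∀ k, 1 ≤ k → k ≤ n → 0 < γ (c k) (c (k - 1))

/-- `r ∼ t`: there are paths both from `r` to `t` and from `t` to `r`. -/
def Conn {m : ℕ} (γ : Fin m → Fin m → ℝ) (r t : Fin m) : Prop :=
  IsPathFrom γ r t ∧ IsPathFrom γ t r

/-- A connected subset: `r ∼ t` for all `r, t ∈ V`. -/
def IsConnSet {m : ℕ} (γ : Fin m → Fin m → ℝ) (V : Finset (Fin m)) : Prop :=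
  ∀ r ∈ V, ∀ t ∈ V, Conn γ r t

/-- A connected component: a maximal (nonempty) connected subset. -/
def IsConnComp {m : ℕ} (γ : Fin m → Fin m → ℝ) (V : Finset (Fin m)) : Prop :=
  V.Nonempty ∧ IsConnSet γ V ∧ ∀ W : Finset (Fin m), IsConnSet γ W → V ⊆ W → W = V

/-- The spectral radius of a real square matrix: the largest modulus of a (complex)
eigenvalue. -/
def specRad {n : Type*} [Fintype n] [DecidableEq n] (A : Matrix n n ℝ) : ℝ :=
  sSup {x : ℝ | ∃ μ ∈ spectrum ℂ (A.map (algebraMap ℝ ℂ)), x = ‖μ‖}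

/-- The submatrix `G|_V` of `G = (γ_{rt})` indexed by a subset `V`. -/
def subMat {m : ℕ} (γ : Fin m → Fin m → ℝ) (V : Finset (Fin m)) :
    Matrix {x // x ∈ V} {x // x ∈ V} ℝ :=
  fun a b => γ a.1 b.1

/-- `(k,l)` is an ancestor of `(i,j)`: there is a chain `(i,j) = (i_0,j_0), …, (i_n,j_n) = (k,l)`
in `Σ_N × Σ_N` with `D_{i_τ j_τ} ⊆ D'_{i_{τ-1} j_{τ-1}}` for all `τ`. -/
def Ancestor (st : Setup) (i j k l : ℕ) : Prop :=
  ∃ n : ℕ, 1 ≤ n ∧ ∃ c : ℕ → ℕ × ℕ,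
    c 0 = (i, j) ∧ c n = (k, l) ∧
    (∀ τ ≤ n, 1 ≤ (c τ).1 ∧ (c τ).1 ≤ st.N ∧ 1 ≤ (c τ).2 ∧ (c τ).2 ≤ st.N) ∧
    ∀ τ, 1 ≤ τ → τ ≤ n →
      Dij st.N (c τ).1 (c τ).2 ⊆ Dij' st.N st.px st.py (c (τ - 1)).1 (c (τ - 1)).2

/-- `A(i,j) = {(i,j)} ∪ {ancestors of (i,j)}`. -/
def AncSet (st : Setup) (i j : ℕ) : Set (ℕ × ℕ) :=
  {(i, j)} ∪ {kl | Ancestor st i j kl.1 kl.2}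

/-- The pair `(i,j)` is degenerate: every `(k,l) ∈ A(i,j)` has all four vertical scaling
corner factors zero, or `z_{pq} = g_{kl}(x_p, y_q)` for all grid points `(x_p, y_q) ∈ D'_{kl}`. -/
def DegenPair (st : Setup) (i j : ℕ) : Prop :=
  ∀ kl ∈ AncSet st i j,
    (st.s (kl.1 - 1) (kl.2 - 1) = 0 ∧ st.s (kl.1 - 1) kl.2 = 0 ∧
      st.s kl.1 (kl.2 - 1) = 0 ∧ st.s kl.1 kl.2 = 0) ∨
    (∀ p ≤ st.N, ∀ q ≤ st.N, (xg st.N p, xg st.N q) ∈ Dij' st.N st.px st.py kl.1 kl.2 →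
      st.z p q = st.g kl.1 kl.2 (xg st.N p, xg st.N q))

/-- The index `r` is degenerate: every `(i,j) ∈ Λ_r` is degenerate. -/
def DegenIdx (st : Setup) {m : ℕ} (B : Fin m → Set (ℝ × ℝ)) (r : Fin m) : Prop :=
  ∀ ij ∈ Lam st B r, DegenPair st ij.1 ij.2

/-- A set `V` of indices is degenerate: every `r ∈ V` is degenerate. -/
def DegenComp (st : Setup) {m : ℕ} (B : Fin m → Set (ℝ × ℝ)) (V : Finset (Fin m)) : Prop :=
  ∀ r ∈ V, DegenIdx st B r

end RFIS

/- Each summand `|S(u_i x, v_j y)|` is bilinear on the common domain `D'_{ij}`: the affine maps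
`u_i, v_j` send it into the cell `D_{ij}`, where `S` is bilinear and, being steady, of constant
sign, so that `|S| = ±S` there. Hence the whole sum is bilinear on the rectangle, and a bilinear
function taking the value `γ_{rt}` at the four corners of a rectangle is constant on it. -/

namespace RFIS

theorem affine_nonneg_of_mem_Icc {A B x₀ x₁ u : ℝ} (hu : u ∈ Icc x₀ x₁)
    (h₀ : 0 ≤ A + B * x₀) (h₁ : 0 ≤ A + B * x₁) : 0 ≤ A + B * u := by
  rcases hu.1.eq_or_lt with rfl | hlt
  · exact h₀
  · have key : (x₁ - x₀) * (A + B * u) = (x₁ - u) * (A + B * x₀) + (u - x₀) * (A + B * x₁) := by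
      ring
    refine (mul_nonneg_iff_of_pos_left (by linarith [hu.2] : 0 < x₁ - x₀)).1 ?_
    rw [key]
    exact add_nonneg (mul_nonneg (sub_nonneg.2 hu.2) h₀) (mul_nonneg (sub_nonneg.2 hu.1) h₁)

theorem interp_mem_Icc_of_mem_uIcc {p₀ p₁ q₀ q₁ t : ℝ} (hp : p₀ ≠ p₁) (hq : q₀ ≤ q₁)
    (ht : t ∈ uIcc p₀ p₁) : q₀ + (t - p₀) * ((q₁ - q₀) / (p₁ - p₀)) ∈ Icc q₀ q₁ := by
  set θ := (t - p₀) / (p₁ - p₀)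
  have hθ : θ ∈ Icc (0 : ℝ) 1 := by
    rcases hp.lt_or_gt with hlt | hlt
    · rw [uIcc_of_le hlt.le] at ht
      exact ⟨div_nonneg (by linarith [ht.1]) (by linarith),
        (div_le_one (by linarith)).2 (by linarith [ht.2])⟩
    · rw [uIcc_of_ge hlt.le] at ht
      exact ⟨div_nonneg_of_nonpos (by linarith [ht.2]) (by linarith),
        (div_le_one_of_neg (by linarith)).2 (by linarith [ht.1])⟩
  have heq : q₀ + (t - p₀) * ((q₁ - q₀) / (p₁ - p₀)) = q₀ + θ * (q₁ - q₀) := by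
    simp only [θ]; ring
  rw [heq]
  constructor <;> nlinarith [hθ.1, hθ.2]

namespace IsBilinearOn

variable {F G : ℝ × ℝ → ℝ} {E E' : Set (ℝ × ℝ)}

theorem const (c : ℝ) : IsBilinearOn (fun _ => c) E :=
  ⟨c, 0, 0, 0, fun _ _ => by ring⟩

theorem add (hF : IsBilinearOn F E) (hG : IsBilinearOn G E) : IsBilinearOn (F + G) E := by
  obtain ⟨a, b, c, d, hF⟩ := hF
  obtain ⟨a', b', c', d', hG⟩ := hG
  exact ⟨a + a', b + b', c + c', d + d', fun p hp => by
    rw [Pi.add_apply, hF p hp, hG p hp]; ring⟩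

theorem neg (hF : IsBilinearOn F E) : IsBilinearOn (-F) E := by
  obtain ⟨a, b, c, d, hF⟩ := hF
  exact ⟨-a, -b, -c, -d, fun p hp => by rw [Pi.neg_apply, hF p hp]; ring⟩

theorem sub_const (hF : IsBilinearOn F E) (g : ℝ) : IsBilinearOn (fun p => F p - g) E := by
  obtain ⟨a, b, c, d, hF⟩ := hF
  exact ⟨a - g, b, c, d, fun p hp => by dsimp only; rw [hF p hp]; ring⟩

theorem congr (hF : IsBilinearOn F E) (h : EqOn F G E) : IsBilinearOn G E := by
  obtain ⟨a, b, c, d, hF⟩ := hF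
  exact ⟨a, b, c, d, fun p hp => (h hp).symm.trans (hF p hp)⟩

theorem sum {ι : Type*} (s : Finset ι) {F : ι → ℝ × ℝ → ℝ}
    (h : ∀ i ∈ s, IsBilinearOn (F i) E) : IsBilinearOn (fun p => ∑ i ∈ s, F i p) E :=
  Finset.sum_fn s F ▸ Finset.sum_induction F (IsBilinearOn · E) (fun _ _ => add) (const 0) h

theorem comp_affine (hF : IsBilinearOn F E) {u v : ℝ → ℝ}
    (hu : ∃ c₀ c₁, ∀ t, u t = c₀ + c₁ * t) (hv : ∃ e₀ e₁, ∀ t, v t = e₀ + e₁ * t)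
    (hmaps : ∀ p ∈ E', (u p.1, v p.2) ∈ E) : IsBilinearOn (fun p => F (u p.1, v p.2)) E' := by
  obtain ⟨a, b, c, d, hF⟩ := hF
  obtain ⟨c₀, c₁, hu⟩ := hu
  obtain ⟨e₀, e₁, hv⟩ := hv
  refine ⟨a + b * c₀ + c * e₀ + d * c₀ * e₀, b * c₁ + d * c₁ * e₀, c * e₁ + d * c₀ * e₁,
    d * c₁ * e₁, fun p hp => ?_⟩
  dsimp only
  rw [hF _ (hmaps p hp), hu, hv]
  ring

theorem abs (hF : IsBilinearOn F E) (hsign : (∀ p ∈ E, 0 ≤ F p) ∨ ∀ p ∈ E, F p ≤ 0) :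
    IsBilinearOn (fun p => |F p|) E := by
  rcases hsign with h | h
  · exact hF.congr fun p hp => (abs_of_nonneg (h p hp)).symm
  · exact hF.neg.congr fun p hp => (abs_of_nonpos (h p hp)).symm

variable {x₀ x₁ y₀ y₁ : ℝ}

theorem nonneg_of_corners (hF : IsBilinearOn F (Icc x₀ x₁ ×ˢ Icc y₀ y₁))
    (h₀₀ : 0 ≤ F (x₀, y₀)) (h₁₀ : 0 ≤ F (x₁, y₀)) (h₀₁ : 0 ≤ F (x₀, y₁))
    (h₁₁ : 0 ≤ F (x₁, y₁)) : ∀ p ∈ Icc x₀ x₁ ×ˢ Icc y₀ y₁, 0 ≤ F p := by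
  rintro ⟨x, y⟩ ⟨hx, hy⟩
  obtain ⟨a, b, c, d, hF⟩ := hF
  have hx₀ : x₀ ∈ Icc x₀ x₁ := left_mem_Icc.2 (hx.1.trans hx.2)
  have hx₁ : x₁ ∈ Icc x₀ x₁ := right_mem_Icc.2 (hx.1.trans hx.2)
  have hy₀ : y₀ ∈ Icc y₀ y₁ := left_mem_Icc.2 (hy.1.trans hy.2)
  have hy₁ : y₁ ∈ Icc y₀ y₁ := right_mem_Icc.2 (hy.1.trans hy.2)
  rw [hF _ ⟨hx₀, hy₀⟩] at h₀₀
  rw [hF _ ⟨hx₁, hy₀⟩] at h₁₀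
  rw [hF _ ⟨hx₀, hy₁⟩] at h₀₁
  rw [hF _ ⟨hx₁, hy₁⟩] at h₁₁
  rw [hF _ ⟨hx, hy⟩]
  have hbot : 0 ≤ (a + c * y₀) + (b + d * y₀) * x :=
    affine_nonneg_of_mem_Icc hx (by linarith) (by linarith)
  have htop : 0 ≤ (a + c * y₁) + (b + d * y₁) * x :=
    affine_nonneg_of_mem_Icc hx (by linarith) (by linarith)
  have := affine_nonneg_of_mem_Icc (A := a + b * x) (B := c + d * x) hy
    (by linarith) (by linarith)
  linarith

theorem nonpos_of_corners (hF : IsBilinearOn F (Icc x₀ x₁ ×ˢ Icc y₀ y₁))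
    (h₀₀ : F (x₀, y₀) ≤ 0) (h₁₀ : F (x₁, y₀) ≤ 0) (h₀₁ : F (x₀, y₁) ≤ 0)
    (h₁₁ : F (x₁, y₁) ≤ 0) : ∀ p ∈ Icc x₀ x₁ ×ˢ Icc y₀ y₁, F p ≤ 0 := fun p hp =>
  neg_nonneg.1 <| hF.neg.nonneg_of_corners (neg_nonneg.2 h₀₀) (neg_nonneg.2 h₁₀)
    (neg_nonneg.2 h₀₁) (neg_nonneg.2 h₁₁) p hp

theorem eq_of_corners {g : ℝ} (hF : IsBilinearOn F (Icc x₀ x₁ ×ˢ Icc y₀ y₁))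
    (h₀₀ : F (x₀, y₀) = g) (h₁₀ : F (x₁, y₀) = g) (h₀₁ : F (x₀, y₁) = g)
    (h₁₁ : F (x₁, y₁) = g) : ∀ p ∈ Icc x₀ x₁ ×ˢ Icc y₀ y₁, F p = g := fun p hp =>
  have hG := hF.sub_const g
  sub_eq_zero.1 <| le_antisymm
    (hG.nonpos_of_corners (by simp [h₀₀]) (by simp [h₁₀]) (by simp [h₀₁]) (by simp [h₁₁]) p hp)
    (hG.nonneg_of_corners (by simp [h₀₀]) (by simp [h₁₀]) (by simp [h₀₁]) (by simp [h₁₁]) p hp)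

end IsBilinearOn

theorem xg_lt_xg {N i j : ℕ} (hN : 0 < N) (hij : i < j) : xg N i < xg N j :=
  div_lt_div_of_pos_right (Nat.cast_lt.2 hij) (Nat.cast_pos.2 hN)

theorem usub_affine (N : ℕ) (px : ℕ → ℕ) (i : ℕ) :
    ∃ c₀ c₁, ∀ t, usub N px i t = c₀ + c₁ * t := by
  set k := (xg N i - xg N (i - 1)) / (xp N px i - xp N px (i - 1))
  exact ⟨xg N (i - 1) - xp N px (i - 1) * k, k, fun t => by simp only [usub, k]; ring⟩

theorem usub_mem_Ii {N K : ℕ} {px : ℕ → ℕ} {i : ℕ} {t : ℝ} (hN : 0 < N) (hK : 0 < K)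
    (hi : 1 ≤ i) (hlen : |xp N px i - xp N px (i - 1)| = K * (xg N i - xg N (i - 1)))
    (ht : t ∈ Ii' N px i) : usub N px i t ∈ Ii N i := by
  have hgap : xg N (i - 1) < xg N i := xg_lt_xg hN (by omega)
  have hpos : 0 < |xp N px i - xp N px (i - 1)| := by
    rw [hlen]; exact mul_pos (Nat.cast_pos.2 hK) (sub_pos.2 hgap)
  have hne : xp N px (i - 1) ≠ xp N px i := fun h => by simp [h] at hpos
  exact interp_mem_Icc_of_mem_uIcc hne hgap.le ht

namespace Setup

variable (st : Setup) {i j : ℕ}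

theorem S_nonneg_or_nonpos_on_Dij (hsteady : Steady st) (hi₁ : 1 ≤ i) (hiN : i ≤ st.N) (hj₁ : 1 ≤ j)
    (hjN : j ≤ st.N) :
    (∀ p ∈ Dij st.N i j, 0 ≤ st.S p) ∨ ∀ p ∈ Dij st.N i j, st.S p ≤ 0 := by
  have hS : IsBilinearOn st.S (Dij st.N i j) := st.hSbil i j hi₁ hiN hj₁ hjN
  have h₀₀ := st.hSval (i - 1) (by omega) (j - 1) (by omega)
  have h₁₀ := st.hSval i hiN (j - 1) (by omega)
  have h₀₁ := st.hSval (i - 1) (by omega) j hjN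
  have h₁₁ := st.hSval i hiN j hjN
  rcases hsteady i j hi₁ hiN hj₁ hjN with ⟨e₀₀, e₀₁, e₁₀, e₁₁⟩ | ⟨e₀₀, e₀₁, e₁₀, e₁₁⟩
  · exact .inl <| hS.nonneg_of_corners (h₀₀ ▸ e₀₀) (h₁₀ ▸ e₁₀) (h₀₁ ▸ e₀₁) (h₁₁ ▸ e₁₁)
  · exact .inr <| hS.nonpos_of_corners (h₀₀ ▸ e₀₀) (h₁₀ ▸ e₁₀) (h₀₁ ▸ e₀₁) (h₁₁ ▸ e₁₁)

theorem isBilinearOn_abs_S_usub (hsteady : Steady st) (hij : (i, j) ∈ idxS st.N) :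
    IsBilinearOn (fun p => |st.S (usub st.N st.px i p.1, usub st.N st.py j p.2)|)
      (Dij' st.N st.px st.py i j) := by
  obtain ⟨⟨hi₁, hiN⟩, hj₁, hjN⟩ : (1 ≤ i ∧ i ≤ st.N) ∧ 1 ≤ j ∧ j ≤ st.N := by
    simpa [idxS] using hij
  have hN : 0 < st.N := by omega
  have hK : 0 < st.K := by have := st.hK; omega
  refine ((st.hSbil i j hi₁ hiN hj₁ hjN).abs
    (st.S_nonneg_or_nonpos_on_Dij hsteady hi₁ hiN hj₁ hjN)).comp_affine (usub_affine _ _ _)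
    (usub_affine _ _ _) fun p hp => ⟨?_, ?_⟩
  · exact usub_mem_Ii hN hK hi₁ (st.hKx i hi₁ hiN) hp.1
  · exact usub_mem_Ii hN hK hj₁ (st.hKy j hj₁ hjN) hp.2

end Setup

end RFIS

open RFIS in
theorem uniform_sums_everywhere_general (st : Setup) (m : ℕ) (B : Fin m → Set (ℝ × ℝ))
    (γ : Fin m → Fin m → ℝ)
    (hsteady : Steady st) (hus : HasUniformSums st B γ) :
    ∀ r t : Fin m, (Lam st B r ∩ Lam' st B t).Nonempty →
      ∀ α β : ℕ, α + st.K ≤ st.N → β + st.K ≤ st.N →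
        (∃ ij ∈ Lam st B r ∩ Lam' st B t,
          Dij' st.N st.px st.py ij.1 ij.2 = rect st.N st.K α β) →
        ∀ p ∈ rect st.N st.K α β,
          (∑ ij ∈ LamAB st B r α β,
            |st.S (usub st.N st.px ij.1 p.1, usub st.N st.py ij.2 p.2)|) = γ r t := by
  classical
  intro r t hne α β hα hβ hrect
  obtain ⟨h₀₀, h₁₀, h₀₁, h₁₁⟩ := hus r t hne α β hα hβ hrect
  have hsum : IsBilinearOn (fun p => ∑ ij ∈ LamAB st B r α β,
      |st.S (usub st.N st.px ij.1 p.1, usub st.N st.py ij.2 p.2)|) (rect st.N st.K α β) :=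
    IsBilinearOn.sum _ fun ij hij => by
      obtain ⟨hLam, hD'⟩ := Finset.mem_filter.1 hij
      rw [← hD']
      exact st.isBilinearOn_abs_S_usub hsteady (Finset.mem_filter.1 hLam).1
  exact hsum.eq_of_corners h₀₀ h₁₀ h₀₁ h₁₁

open RFIS in
/-- **Lemma 4.2.**  If the vertical scaling factors are steady and have uniform sums
`γ_{rt}` under a compatible partition, then for all `r, t` with `Λ_r ∩ Λ'_t ≠ ∅` and all
`α, β` with `[x_α, x_{α+K}] × [y_β, y_{β+K}] ∈ {D'_{ij} : (i,j) ∈ Λ_r ∩ Λ'_t}`,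
`Σ_{(i,j) ∈ Λ_r(α,β)} |S(u_i(x), v_j(y))| = γ_{rt}` for every point `(x, y)` of the
rectangle. -/
theorem uniform_sums_everywhere (st : Setup) (m : ℕ) (B : Fin m → Set (ℝ × ℝ))
    (γ : Fin m → Fin m → ℝ) (hpart : IsPartition m B) (hcomp : IsCompatible st B)
    (hsteady : Steady st) (hus : HasUniformSums st B γ) :
    ∀ r t : Fin m, (Lam st B r ∩ Lam' st B t).Nonempty →
      ∀ α β : ℕ, α + st.K ≤ st.N → β + st.K ≤ st.N →
        (∃ ij ∈ Lam st B r ∩ Lam' st B t,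
          Dij' st.N st.px st.py ij.1 ij.2 = rect st.N st.K α β) →
        ∀ p ∈ rect st.N st.K α β,
          (∑ ij ∈ LamAB st B r α β,
            |st.S (usub st.N st.px ij.1 p.1, usub st.N st.py ij.2 p.2)|) = γ r t :=
  uniform_sums_everywhere_general st m B γ hsteady hus
end
end

section
/- Let f be the bilinear RFIF from the bilinear RFIF setup, and let (i,j) be degenerate. Then for every (k,ℓ)∈A(i,j), f(x,y)=h(x,y) for all (x,y)∈D_{kℓ}. -/
/- Bilinear recurrent fractal interpolation surfaces on [0,1]² (Liang–Ruan,
   "Construction and box dimension of recurrent fractal interpolation surfaces"). -/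

noncomputable section
open Set Filter

open RFIS

section AuxLemmas

/-- Convex-combination bound for bilinear interpolation weights. -/
lemma comb_bound {lam mu v1 v2 v3 v4 c0 v : ℝ}
    (hl0 : 0 ≤ lam) (hl1 : lam ≤ 1) (hm0 : 0 ≤ mu) (hm1 : mu ≤ 1)
    (hv : v = (1-lam)*(1-mu)*v1 + lam*(1-mu)*v2 + (1-lam)*mu*v3 + lam*mu*v4)
    (h1 : |v1| ≤ c0) (h2 : |v2| ≤ c0) (h3 : |v3| ≤ c0) (h4 : |v4| ≤ c0) :
    |v| ≤ c0 := by
  rw [abs_le] at h1 h2 h3 h4 ⊢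
  have w1 : (0:ℝ) ≤ (1-lam)*(1-mu) := mul_nonneg (by linarith) (by linarith)
  have w2 : (0:ℝ) ≤ lam*(1-mu) := mul_nonneg hl0 (by linarith)
  have w3 : (0:ℝ) ≤ (1-lam)*mu := mul_nonneg (by linarith) hm0
  have w4 : (0:ℝ) ≤ lam*mu := mul_nonneg hl0 hm0
  constructor
  · have hsum : v + c0 = (1-lam)*(1-mu)*(v1+c0) + lam*(1-mu)*(v2+c0)
        + (1-lam)*mu*(v3+c0) + lam*mu*(v4+c0) := by rw [hv]; ring
    nlinarith [mul_nonneg w1 (by linarith : (0:ℝ) ≤ v1+c0),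
      mul_nonneg w2 (by linarith : (0:ℝ) ≤ v2+c0),
      mul_nonneg w3 (by linarith : (0:ℝ) ≤ v3+c0),
      mul_nonneg w4 (by linarith : (0:ℝ) ≤ v4+c0)]
  · have hsum : c0 - v = (1-lam)*(1-mu)*(c0-v1) + lam*(1-mu)*(c0-v2)
        + (1-lam)*mu*(c0-v3) + lam*mu*(c0-v4) := by rw [hv]; ring
    nlinarith [mul_nonneg w1 (by linarith : (0:ℝ) ≤ c0-v1),
      mul_nonneg w2 (by linarith : (0:ℝ) ≤ c0-v2),
      mul_nonneg w3 (by linarith : (0:ℝ) ≤ c0-v3),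
      mul_nonneg w4 (by linarith : (0:ℝ) ≤ c0-v4)]

lemma bilin_comb (A B C D a b c d x y : ℝ) (hab : b - a ≠ 0) (hcd : d - c ≠ 0) :
    A + B*x + C*y + D*x*y =
      (1-(x-a)/(b-a))*(1-(y-c)/(d-c))*(A + B*a + C*c + D*a*c)
      + ((x-a)/(b-a))*(1-(y-c)/(d-c))*(A + B*b + C*c + D*b*c)
      + (1-(x-a)/(b-a))*((y-c)/(d-c))*(A + B*a + C*d + D*a*d)
      + ((x-a)/(b-a))*((y-c)/(d-c))*(A + B*b + C*d + D*b*d) := by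
  field_simp
  ring

lemma bilin_bound (F : ℝ × ℝ → ℝ) (a b c d c0 : ℝ) (hab : a < b) (hcd : c < d)
    (hF : IsBilinearOn F (Icc a b ×ˢ Icc c d))
    (h1 : |F (a,c)| ≤ c0) (h2 : |F (b,c)| ≤ c0) (h3 : |F (a,d)| ≤ c0) (h4 : |F (b,d)| ≤ c0) :
    ∀ p ∈ Icc a b ×ˢ Icc c d, |F p| ≤ c0 := by
  obtain ⟨A, B, C, D, hrep⟩ := hF
  intro p hp
  obtain ⟨hx, hy⟩ := hp
  rw [mem_Icc] at hx hy
  have hba : b - a ≠ 0 := by linarith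
  have hdc : d - c ≠ 0 := by linarith
  have mac : ((a,c) : ℝ × ℝ) ∈ Icc a b ×ˢ Icc c d := by
    constructor <;> simp [hab.le, hcd.le]
  have mbc : ((b,c) : ℝ × ℝ) ∈ Icc a b ×ˢ Icc c d := by
    constructor <;> simp [hab.le, hcd.le]
  have mad : ((a,d) : ℝ × ℝ) ∈ Icc a b ×ˢ Icc c d := by
    constructor <;> simp [hab.le, hcd.le]
  have mbd : ((b,d) : ℝ × ℝ) ∈ Icc a b ×ˢ Icc c d := by
    constructor <;> simp [hab.le, hcd.le]
  have hl0 : 0 ≤ (p.1 - a)/(b-a) := div_nonneg (by linarith) (by linarith)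
  have hl1 : (p.1 - a)/(b-a) ≤ 1 := by
    rw [div_le_one (by linarith)]; linarith
  have hm0 : 0 ≤ (p.2 - c)/(d-c) := div_nonneg (by linarith) (by linarith)
  have hm1 : (p.2 - c)/(d-c) ≤ 1 := by
    rw [div_le_one (by linarith)]; linarith
  refine comb_bound hl0 hl1 hm0 hm1 ?_ h1 h2 h3 h4
  rw [hrep p ⟨by rw [mem_Icc]; exact hx, by rw [mem_Icc]; exact hy⟩,
    hrep _ mac, hrep _ mbc, hrep _ mad, hrep _ mbd]
  simpa using bilin_comb A B C D a b c d p.1 p.2 hba hdc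

lemma bilin_mono {F : ℝ × ℝ → ℝ} {E E' : Set (ℝ × ℝ)}
    (hF : IsBilinearOn F E) (hE : E' ⊆ E) : IsBilinearOn F E' := by
  obtain ⟨A, B, C, D, hrep⟩ := hF
  exact ⟨A, B, C, D, fun p hp => hrep p (hE hp)⟩

lemma bilin_eq (F G : ℝ × ℝ → ℝ) (a b c d : ℝ) (hab : a < b) (hcd : c < d)
    (hF : IsBilinearOn F (Icc a b ×ˢ Icc c d)) (hG : IsBilinearOn G (Icc a b ×ˢ Icc c d))
    (e1 : F (a,c) = G (a,c)) (e2 : F (b,c) = G (b,c))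
    (e3 : F (a,d) = G (a,d)) (e4 : F (b,d) = G (b,d)) :
    ∀ p ∈ Icc a b ×ˢ Icc c d, F p = G p := by
  obtain ⟨A, B, C, D, hFr⟩ := hF
  obtain ⟨A', B', C', D', hGr⟩ := hG
  have hH : IsBilinearOn (fun p => F p - G p) (Icc a b ×ˢ Icc c d) := by
    refine ⟨A - A', B - B', C - C', D - D', fun p hp => ?_⟩
    show F p - G p = _; rw [hFr p hp, hGr p hp]; ring
  intro p hp
  have hb := bilin_bound (fun p => F p - G p) a b c d 0 hab hcd hH
    (by simp [e1]) (by simp [e2]) (by simp [e3]) (by simp [e4]) p hp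
  have h0 : |F p - G p| = 0 := le_antisymm hb (abs_nonneg _)
  have := abs_eq_zero.mp h0
  linarith

lemma xg_sub_one {N k : ℕ} (hN : 1 ≤ N) (hk : 1 ≤ k) :
    xg N k - xg N (k-1) = 1 / (N:ℝ) := by
  have hc : ((k-1 : ℕ):ℝ) = (k:ℝ) - 1 := by
    rw [Nat.cast_sub hk]; norm_num
  rw [xg, xg, hc, div_sub_div_same]
  ring_nf

lemma xg_mono {N : ℕ} (hN : 1 ≤ N) {m n : ℕ} (h : m ≤ n) : xg N m ≤ xg N n := by
  have hN0 : (0:ℝ) < N := by exact_mod_cast hN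
  rw [xg, xg, div_le_div_iff_of_pos_right hN0]
  exact_mod_cast h

lemma xg_lt {N k : ℕ} (hN : 1 ≤ N) (hk : 1 ≤ k) : xg N (k-1) < xg N k := by
  have hN0 : (0:ℝ) < N := by exact_mod_cast hN
  have h1 : (0:ℝ) < 1 / N := by positivity
  linarith [xg_sub_one (N := N) (k := k) hN hk]

lemma usub_surj (N K : ℕ) (px : ℕ → ℕ) (hN : 1 ≤ N) (hK : 1 ≤ K) (k : ℕ)
    (hk1 : 1 ≤ k)
    (hKx : |xp N px k - xp N px (k-1)| = (K:ℝ) * (xg N k - xg N (k-1))) :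
    ∀ X ∈ Ii N k, ∃ t ∈ Ii' N px k, usub N px k t = X := by
  have hN0 : (0:ℝ) < N := by exact_mod_cast hN
  have hK0 : (0:ℝ) < K := by exact_mod_cast hK
  have hstep : xg N k - xg N (k-1) = 1/(N:ℝ) := xg_sub_one hN hk1
  have habs : |xp N px k - xp N px (k-1)| = (K:ℝ)/N := by rw [hKx, hstep]; ring
  have hne : xp N px k - xp N px (k-1) ≠ 0 := by
    intro h
    rw [h, abs_zero] at habs
    have : (0:ℝ) < (K:ℝ)/N := by positivity
    linarith
  intro X hX
  rw [Ii, mem_Icc] at hX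
  set a := xp N px (k-1) with ha
  set b := xp N px k with hb
  set θ := (X - xg N (k-1)) * N with hθ
  have hθ0 : 0 ≤ θ := mul_nonneg (by linarith [hX.1]) hN0.le
  have hθ1 : θ ≤ 1 := by
    have hXle : X - xg N (k-1) ≤ 1/N := by linarith [hX.2]
    calc θ ≤ (1/(N:ℝ))*N := mul_le_mul_of_nonneg_right hXle hN0.le
    _ = 1 := by field_simp
  refine ⟨a + θ*(b-a), ?_, ?_⟩
  · rw [Ii', Set.mem_uIcc]
    rcases le_total a b with h | h
    · left; constructor <;> nlinarith
    · right; constructor <;> nlinarith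
  · show xg N (k-1) + (a + θ*(b-a) - a) * ((xg N k - xg N (k-1)) / (b - a)) = X
    rw [hstep]
    have hba : b - a ≠ 0 := hne
    have e1 : a + θ*(b-a) - a = θ*(b-a) := by ring
    rw [e1]
    have e2 : θ*(b-a) * ((1/(N:ℝ)) / (b - a)) = θ/N := by
      field_simp
    have e3 : θ / (N:ℝ) = X - xg N (k-1) := by
      rw [hθ]
      field_simp
    rw [e2, e3]
    ring

lemma Ii'_struct (N K : ℕ) (px : ℕ → ℕ) (hN : 1 ≤ N) (hK : 1 ≤ K) (k : ℕ)
    (hk1 : 1 ≤ k) (hkN : k ≤ N) (hpx : ∀ i ≤ N, px i ≤ N)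
    (hKx : |xp N px k - xp N px (k-1)| = (K:ℝ) * (xg N k - xg N (k-1))) :
    ∃ a : ℕ, a + K ≤ N ∧ Ii' N px k = Icc (xg N a) (xg N (a + K)) := by
  have hN0 : (0:ℝ) < N := by exact_mod_cast hN
  have hstep : xg N k - xg N (k-1) = 1/(N:ℝ) := xg_sub_one hN hk1
  have habs : |((px k : ℝ)) - (px (k-1) : ℝ)| = (K:ℝ) := by
    have h1 : |xp N px k - xp N px (k-1)| = |((px k:ℝ)) - (px (k-1):ℝ)| / N := by
      rw [xp, xp, xg, xg, div_sub_div_same, abs_div, abs_of_pos hN0]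
    rw [h1, hstep] at hKx
    field_simp at hKx
    linarith [hKx]
  have hmax : ((max (px (k-1)) (px k) : ℕ):ℝ) - ((min (px (k-1)) (px k) : ℕ):ℝ) = K := by
    rw [Nat.cast_max, Nat.cast_min, max_sub_min_eq_abs]
    first
    | exact habs
    | (rw [abs_sub_comm]; exact habs)
  have hnat : min (px (k-1)) (px k) + K = max (px (k-1)) (px k) := by
    have : ((min (px (k-1)) (px k) : ℕ):ℝ) + K = ((max (px (k-1)) (px k) : ℕ):ℝ) := by
      linarith
    exact_mod_cast this
  have hmaxN : max (px (k-1)) (px k) ≤ N :=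
    max_le (hpx _ (le_trans (Nat.sub_le k 1) hkN)) (hpx _ hkN)
  refine ⟨min (px (k-1)) (px k), by omega, ?_⟩
  rcases le_total (px (k-1)) (px k) with h | h
  · have hmin : min (px (k-1)) (px k) = px (k-1) := min_eq_left h
    have hmx : max (px (k-1)) (px k) = px k := max_eq_right h
    have hle : xp N px (k-1) ≤ xp N px k := by
      rw [xp, xp, xg, xg, div_le_div_iff_of_pos_right hN0]
      exact_mod_cast h
    rw [Ii', uIcc_of_le hle]
    rw [hnat, hmin, hmx]
    rfl
  · have hmin : min (px (k-1)) (px k) = px k := min_eq_right h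
    have hmx : max (px (k-1)) (px k) = px (k-1) := max_eq_left h
    have hle : xp N px k ≤ xp N px (k-1) := by
      rw [xp, xp, xg, xg, div_le_div_iff_of_pos_right hN0]
      exact_mod_cast h
    rw [Ii', uIcc_of_ge hle]
    rw [hnat, hmin, hmx]
    rfl

lemma Ii'_cover (N K : ℕ) (px : ℕ → ℕ) (hN : 1 ≤ N) (hK : 1 ≤ K) (k : ℕ)
    (hk1 : 1 ≤ k) (hkN : k ≤ N) (hpx : ∀ i ≤ N, px i ≤ N)
    (hKx : |xp N px k - xp N px (k-1)| = (K:ℝ) * (xg N k - xg N (k-1))) :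
    ∀ x ∈ Ii' N px k, ∃ p, 1 ≤ p ∧ p ≤ N ∧ x ∈ Ii N p ∧ Ii N p ⊆ Ii' N px k := by
  obtain ⟨a, haK, hIi'⟩ := Ii'_struct N K px hN hK k hk1 hkN hpx hKx
  have hN0 : (0:ℝ) < N := by exact_mod_cast hN
  intro x hx
  rw [hIi', mem_Icc, xg, xg] at hx
  set u := x * N - (a:ℝ) with hu
  have hu0 : 0 ≤ u := by
    rw [hu]
    have := hx.1
    rw [div_le_iff₀ hN0] at this
    linarith
  have huK : u ≤ K := by
    rw [hu]
    have := hx.2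
    rw [le_div_iff₀ hN0] at this
    push_cast at this
    linarith
  set c : ℕ := max 1 (⌈u⌉.toNat) with hc
  have hc1 : 1 ≤ c := le_max_left _ _
  have hcK : c ≤ K := by
    have hceil : ⌈u⌉ ≤ (K:ℤ) := Int.ceil_le.mpr (by exact_mod_cast huK)
    have : ⌈u⌉.toNat ≤ K := by omega
    exact max_le hK this
  have hbounds : (c:ℝ) - 1 ≤ u ∧ u ≤ c := by
    by_cases h : ⌈u⌉ ≤ 1
    · have hcc : c = 1 := by
        have : ⌈u⌉.toNat ≤ 1 := by omega
        omega
      constructor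
      · rw [hcc]; push_cast; linarith
      · rw [hcc]
        have := Int.le_ceil u
        have h1 : ((⌈u⌉:ℤ):ℝ) ≤ 1 := by exact_mod_cast h
        push_cast
        linarith
    · push_neg at h
      have h0 : (0:ℤ) ≤ ⌈u⌉ := by omega
      have hcc : c = ⌈u⌉.toNat := by omega
      have h2 : ((⌈u⌉.toNat : ℤ)) = ⌈u⌉ := Int.toNat_of_nonneg h0
      have hcast : ((c:ℕ):ℝ) = ((⌈u⌉:ℤ):ℝ) := by
        rw [hcc]
        exact_mod_cast h2
      constructor
      · rw [hcast]
        have := Int.ceil_lt_add_one u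
        push_cast at this ⊢
        linarith
      · rw [hcast]
        exact Int.le_ceil u
  refine ⟨a + c, by omega, by omega, ?_, ?_⟩
  · rw [Ii, mem_Icc]
    have hsub : a + c - 1 = a + (c - 1) := by omega
    constructor
    · rw [hsub, xg, div_le_iff₀ hN0]
      have : ((a + (c-1) : ℕ):ℝ) = (a:ℝ) + (c:ℝ) - 1 := by
        push_cast [Nat.cast_sub hc1]
        ring
      rw [this]
      linarith [hbounds.1]
    · rw [xg, le_div_iff₀ hN0]
      push_cast
      linarith [hbounds.2]
  · rw [hIi', Ii]
    apply Icc_subset_Icc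
    · apply xg_mono hN; omega
    · apply xg_mono hN; omega

lemma ancSet_range (st : Setup) (i j : ℕ) (hi1 : 1 ≤ i) (hiN : i ≤ st.N)
    (hj1 : 1 ≤ j) (hjN : j ≤ st.N) :
    ∀ kl ∈ AncSet st i j, 1 ≤ kl.1 ∧ kl.1 ≤ st.N ∧ 1 ≤ kl.2 ∧ kl.2 ≤ st.N := by
  rintro ⟨k, l⟩ (h | h)
  · simp only [Set.mem_singleton_iff, Prod.mk.injEq] at h
    obtain ⟨rfl, rfl⟩ := h
    exact ⟨hi1, hiN, hj1, hjN⟩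
  · obtain ⟨n, hn1, c, hc0, hcn, hrange, hsub⟩ := h
    have h2 := hrange n le_rfl
    rw [hcn] at h2
    exact h2

lemma ancSet_extend (st : Setup) (i j : ℕ) (hi1 : 1 ≤ i) (hiN : i ≤ st.N)
    (hj1 : 1 ≤ j) (hjN : j ≤ st.N) {kl : ℕ × ℕ} (hkl : kl ∈ AncSet st i j)
    {p q : ℕ} (hp1 : 1 ≤ p) (hpN : p ≤ st.N) (hq1 : 1 ≤ q) (hqN : q ≤ st.N)
    (hsub : Dij st.N p q ⊆ Dij' st.N st.px st.py kl.1 kl.2) :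
    (p, q) ∈ AncSet st i j := by
  rcases hkl with h | h
  · rw [Set.mem_singleton_iff] at h
    subst h
    refine Or.inr ⟨1, le_rfl, fun τ => if τ = 0 then (i, j) else (p, q), by simp, by simp, ?_, ?_⟩
    · intro τ hτ
      by_cases h0 : τ = 0
      · simp only [h0, if_true]
        exact ⟨hi1, hiN, hj1, hjN⟩
      · simp only [h0, if_false]
        exact ⟨hp1, hpN, hq1, hqN⟩
    · intro τ h1τ h2τ
      have hτ : τ = 1 := le_antisymm h2τ h1τ
      subst hτ
      simpa using hsub
  · obtain ⟨n, hn1, c, hc0, hcn, hrange, hstep⟩ := h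
    have hn1' : ¬ (n + 1 ≤ n) := by omega
    refine Or.inr ⟨n + 1, by omega, fun τ => if τ ≤ n then c τ else (p, q), ?_, ?_, ?_, ?_⟩
    · simp [hc0]
    · simp [hn1']
    · intro τ hτ
      by_cases hτn : τ ≤ n
      · simp only [hτn, if_true]
        exact hrange τ hτn
      · simp only [hτn, if_false]
        exact ⟨hp1, hpN, hq1, hqN⟩
    · intro τ h1τ h2τ
      by_cases hτn : τ ≤ n
      · have hτ1 : τ - 1 ≤ n := by omega
        simp only [hτn, hτ1, if_true]
        exact hstep τ h1τ hτn
      · have hτ1 : τ - 1 = n := by omega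
        simp only [hτn, if_false, hτ1, le_refl, if_true]
        rw [hcn]
        simpa using hsub

end AuxLemmas


open RFIS in
/-- **Lemma 4.7 (1).**  If `(i,j)` is degenerate, then `f = h` on `D_{kl}` for every
`(k,l) ∈ A(i,j)`. -/
theorem degenerate_pair_f_eq_h (st : Setup) (i j : ℕ)
    (hi1 : 1 ≤ i) (hiN : i ≤ st.N) (hj1 : 1 ≤ j) (hjN : j ≤ st.N)
    (hdeg : DegenPair st i j) :
    ∀ kl ∈ AncSet st i j, ∀ p ∈ Dij st.N kl.1 kl.2, st.f p = st.h p := by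
  classical
  have hN1 : 1 ≤ st.N := le_trans one_le_two st.hN
  have hN0 : (0:ℝ) < st.N := by exact_mod_cast hN1
  have hK1 : 1 ≤ st.K := le_trans one_le_two st.hK
  have hsq : ∀ k l : ℕ, k ≤ st.N → l ≤ st.N → Dij st.N k l ⊆ sq := by
    intro k l hk hl
    rintro ⟨X, Y⟩ ⟨hx, hy⟩
    rw [Ii, mem_Icc] at hx hy
    have h00 : (0:ℝ) = xg st.N 0 := by simp [xg]
    have h11 : xg st.N st.N = 1 := by
      rw [xg]; field_simp
    constructor
    · rw [mem_Icc]
      constructor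
      · rw [h00]
        exact le_trans (xg_mono hN1 (Nat.zero_le _)) hx.1
      · exact le_trans hx.2 (by rw [← h11]; exact xg_mono hN1 hk)
    · rw [mem_Icc]
      constructor
      · rw [h00]
        exact le_trans (xg_mono hN1 (Nat.zero_le _)) hy.1
      · exact le_trans hy.2 (by rw [← h11]; exact xg_mono hN1 hl)
  set T : Finset (ℕ × ℕ) := (idxS st.N).filter (fun kl => kl ∈ AncSet st i j) with hT
  have hmemT : ∀ kl, kl ∈ T ↔ kl ∈ AncSet st i j := by
    intro kl
    rw [hT, Finset.mem_filter]
    constructor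
    · exact fun h => h.2
    · intro h
      obtain ⟨h1, h2, h3, h4⟩ := ancSet_range st i j hi1 hiN hj1 hjN kl h
      refine ⟨?_, h⟩
      simp only [idxS, Finset.mem_product, Finset.mem_Icc]
      exact ⟨⟨h1, h2⟩, h3, h4⟩
  set U : Set (ℝ × ℝ) := ⋃ kl ∈ T, Dij st.N kl.1 kl.2 with hU
  have hDcomp : ∀ kl : ℕ × ℕ, IsCompact (Dij st.N kl.1 kl.2) := fun kl =>
    isCompact_Icc.prod isCompact_Icc
  have hUcomp : IsCompact U := by
    rw [hU]
    exact T.isCompact_biUnion (fun kl _ => hDcomp kl)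
  have hUsub : U ⊆ sq := by
    rw [hU]
    refine Set.iUnion₂_subset fun kl hkl => ?_
    obtain ⟨h1, h2, h3, h4⟩ := ancSet_range st i j hi1 hiN hj1 hjN kl ((hmemT kl).1 hkl)
    exact hsq kl.1 kl.2 h2 h4
  have hijT : (i, j) ∈ T := (hmemT _).2 (Or.inl rfl)
  have hcornerij : (xg st.N i, xg st.N j) ∈ Dij st.N i j :=
    ⟨⟨xg_mono hN1 (Nat.sub_le i 1), le_refl _⟩, ⟨xg_mono hN1 (Nat.sub_le j 1), le_refl _⟩⟩
  have hUne : U.Nonempty := ⟨_, Set.mem_iUnion₂.mpr ⟨(i, j), hijT, hcornerij⟩⟩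
  have hcont : ContinuousOn (fun p => |st.f p - st.h p|) U :=
    ((st.hfcont.sub st.hhcont).abs).mono hUsub
  obtain ⟨p0, hp0U, hp0max⟩ := hUcomp.exists_isMaxOn hUne hcont
  set M := |st.f p0 - st.h p0| with hMdef
  have hM0 : 0 ≤ M := abs_nonneg _
  have hle : ∀ p ∈ U, |st.f p - st.h p| ≤ M := fun p hp => hp0max hp
  obtain ⟨kl0, hkl0T, hp0D⟩ := Set.mem_iUnion₂.mp hp0U
  obtain ⟨k, l⟩ := kl0
  have hklA : (k, l) ∈ AncSet st i j := (hmemT _).1 hkl0T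
  obtain ⟨hk1, hkN, hl1, hlN⟩ := ancSet_range st i j hi1 hiN hj1 hjN _ hklA
  obtain ⟨x, hx, hux⟩ := usub_surj st.N st.K st.px hN1 hK1 k hk1 (st.hKx k hk1 hkN) p0.1 hp0D.1
  obtain ⟨y, hy, hvy⟩ := usub_surj st.N st.K st.py hN1 hK1 l hl1 (st.hKy l hl1 hlN) p0.2 hp0D.2
  have hxyD' : (x, y) ∈ Dij' st.N st.px st.py k l := ⟨hx, hy⟩
  have hfp0 : st.f p0 - st.h p0 = st.S p0 * (st.f (x, y) - st.g k l (x, y)) := by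
    have he := st.hfeq k l hk1 hkN hl1 hlN (x, y) hxyD'
    simp only at he
    rw [hux, hvy, Prod.mk.eta] at he
    linarith
  have hM_eq_zero : M = 0 := by
    rcases hdeg (k, l) hklA with hzero | hgz
    · have hS0 : |st.S p0| ≤ 0 := by
        refine bilin_bound st.S (xg st.N (k-1)) (xg st.N k) (xg st.N (l-1)) (xg st.N l) 0
          (xg_lt hN1 hk1) (xg_lt hN1 hl1) (st.hSbil k l hk1 hkN hl1 hlN) ?_ ?_ ?_ ?_ p0 hp0D
        · rw [st.hSval (k-1) (by omega) (l-1) (by omega),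
            show st.s (k-1) (l-1) = 0 from hzero.1]
          simp
        · rw [st.hSval k hkN (l-1) (by omega),
            show st.s k (l-1) = 0 from hzero.2.2.1]
          simp
        · rw [st.hSval (k-1) (by omega) l hlN,
            show st.s (k-1) l = 0 from hzero.2.1]
          simp
        · rw [st.hSval k hkN l hlN, show st.s k l = 0 from hzero.2.2.2]
          simp
      have hS00 : st.S p0 = 0 := abs_eq_zero.mp (le_antisymm hS0 (abs_nonneg _))
      rw [hMdef, hfp0, hS00, zero_mul, abs_zero]
    · obtain ⟨p, hp1, hpN, hxp, hIp⟩ :=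
        Ii'_cover st.N st.K st.px hN1 hK1 k hk1 hkN st.hpx (st.hKx k hk1 hkN) x hx
      obtain ⟨q, hq1, hqN, hyq, hIq⟩ :=
        Ii'_cover st.N st.K st.py hN1 hK1 l hl1 hlN st.hpy (st.hKy l hl1 hlN) y hy
      have hDsub : Dij st.N p q ⊆ Dij' st.N st.px st.py k l := Set.prod_mono hIp hIq
      have hpqA : (p, q) ∈ AncSet st i j :=
        ancSet_extend st i j hi1 hiN hj1 hjN hklA hp1 hpN hq1 hqN hDsub
      have hxyD : (x, y) ∈ Dij st.N p q := ⟨hxp, hyq⟩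
      have hm1 : (xg st.N (p-1), xg st.N (q-1)) ∈ Dij st.N p q :=
        ⟨⟨le_refl _, (xg_lt hN1 hp1).le⟩, ⟨le_refl _, (xg_lt hN1 hq1).le⟩⟩
      have hm2 : (xg st.N p, xg st.N (q-1)) ∈ Dij st.N p q :=
        ⟨⟨(xg_lt hN1 hp1).le, le_refl _⟩, ⟨le_refl _, (xg_lt hN1 hq1).le⟩⟩
      have hm3 : (xg st.N (p-1), xg st.N q) ∈ Dij st.N p q :=
        ⟨⟨le_refl _, (xg_lt hN1 hp1).le⟩, ⟨(xg_lt hN1 hq1).le, le_refl _⟩⟩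
      have hm4 : (xg st.N p, xg st.N q) ∈ Dij st.N p q :=
        ⟨⟨(xg_lt hN1 hp1).le, le_refl _⟩, ⟨(xg_lt hN1 hq1).le, le_refl _⟩⟩
      have hhg : st.h (x, y) = st.g k l (x, y) := by
        refine bilin_eq st.h (st.g k l) (xg st.N (p-1)) (xg st.N p) (xg st.N (q-1)) (xg st.N q)
          (xg_lt hN1 hp1) (xg_lt hN1 hq1) (st.hhbil p q hp1 hpN hq1 hqN)
          (bilin_mono (st.hgbil k l hk1 hkN hl1 hlN) hDsub) ?_ ?_ ?_ ?_ (x, y) hxyD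
        · rw [st.hhval (p-1) (by omega) (q-1) (by omega)]
          exact hgz (p-1) (by omega) (q-1) (by omega) (hDsub hm1)
        · rw [st.hhval p hpN (q-1) (by omega)]
          exact hgz p hpN (q-1) (by omega) (hDsub hm2)
        · rw [st.hhval (p-1) (by omega) q hqN]
          exact hgz (p-1) (by omega) q hqN (hDsub hm3)
        · rw [st.hhval p hpN q hqN]
          exact hgz p hpN q hqN (hDsub hm4)
      set c0 := max (max |st.s (k-1) (l-1)| |st.s (k-1) l|) (max |st.s k (l-1)| |st.s k l|)
        with hc0
      have hc0lt : c0 < 1 :=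
        max_lt (max_lt (st.hs (k-1) (by omega) (l-1) (by omega)) (st.hs (k-1) (by omega) l hlN))
          (max_lt (st.hs k hkN (l-1) (by omega)) (st.hs k hkN l hlN))
      have hSb : |st.S p0| ≤ c0 := by
        refine bilin_bound st.S (xg st.N (k-1)) (xg st.N k) (xg st.N (l-1)) (xg st.N l) c0
          (xg_lt hN1 hk1) (xg_lt hN1 hl1) (st.hSbil k l hk1 hkN hl1 hlN) ?_ ?_ ?_ ?_ p0 hp0D
        · rw [st.hSval (k-1) (by omega) (l-1) (by omega)]
          exact le_max_of_le_left (le_max_left _ _)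
        · rw [st.hSval k hkN (l-1) (by omega)]
          exact le_max_of_le_right (le_max_left _ _)
        · rw [st.hSval (k-1) (by omega) l hlN]
          exact le_max_of_le_left (le_max_right _ _)
        · rw [st.hSval k hkN l hlN]
          exact le_max_of_le_right (le_max_right _ _)
      have hc00 : (0:ℝ) ≤ c0 := le_trans (abs_nonneg _) hSb
      have hxyU : (x, y) ∈ U := by
        rw [hU]
        exact Set.mem_iUnion₂.mpr ⟨(p, q), (hmemT _).2 hpqA, hxyD⟩
      have h1 : |st.f (x, y) - st.h (x, y)| ≤ M := hle _ hxyU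
      have hMc : M ≤ c0 * M := by
        have hMM : M = |st.S p0| * |st.f (x, y) - st.h (x, y)| := by
          rw [hMdef, hfp0, abs_mul, ← hhg]
        calc M = |st.S p0| * |st.f (x, y) - st.h (x, y)| := hMM
        _ ≤ c0 * M := mul_le_mul hSb h1 (abs_nonneg _) hc00
      have hMle : M ≤ 0 := by nlinarith
      linarith
  intro kl hkl p hp
  have hpU : p ∈ U := by
    rw [hU]
    exact Set.mem_iUnion₂.mpr ⟨kl, (hmemT _).2 hkl, hp⟩
  have hb := hle p hpU
  rw [hM_eq_zero] at hb
  have h0 : st.f p - st.h p = 0 := abs_eq_zero.mp (le_antisymm hb (abs_nonneg _))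
  linarith
end
end

section
/- Let f be the bilinear RFIF from the bilinear RFIF setup, and let (i,j) be degenerate. Then (a) there exists a constant C>0 such that O(f,n,D_{ij}) ≤ C·Kⁿ for all n≥1, and (b) the box dimension of Γf|_{D_{ij}} = {(x,y,f(x,y)) : (x,y)∈D_{ij}} exists and equals 2. -/
/- Bilinear recurrent fractal interpolation surfaces on [0,1]² (Liang–Ruan,
   "Construction and box dimension of recurrent fractal interpolation surfaces"). -/

noncomputable section
open Set Filter

namespace RFIS

private lemma bilin_combo' (a b c d x0 x1 y0 y1 t u : ℝ) :
    a + b*(x0 + t*(x1-x0)) + c*(y0 + u*(y1-y0)) + d*(x0 + t*(x1-x0))*(y0 + u*(y1-y0)) =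
      (1-t)*(1-u)*(a + b*x0 + c*y0 + d*x0*y0) + t*(1-u)*(a + b*x1 + c*y0 + d*x1*y0)
      + (1-t)*u*(a + b*x0 + c*y1 + d*x0*y1) + t*u*(a + b*x1 + c*y1 + d*x1*y1) := by
  ring

lemma bilin_combo (a b c d x0 x1 y0 y1 x y : ℝ)
    (hx0 : x0 ≤ x) (hx1 : x ≤ x1) (hy0 : y0 ≤ y) (hy1 : y ≤ y1)
    (hxx : x0 < x1) (hyy : y0 < y1) :
    ∃ t u : ℝ, 0 ≤ t ∧ t ≤ 1 ∧ 0 ≤ u ∧ u ≤ 1 ∧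
      a + b*x + c*y + d*x*y =
        (1-t)*(1-u)*(a + b*x0 + c*y0 + d*x0*y0) + t*(1-u)*(a + b*x1 + c*y0 + d*x1*y0)
        + (1-t)*u*(a + b*x0 + c*y1 + d*x0*y1) + t*u*(a + b*x1 + c*y1 + d*x1*y1) := by
  have hne : x1 - x0 ≠ 0 := sub_ne_zero.mpr hxx.ne'
  have hne' : y1 - y0 ≠ 0 := sub_ne_zero.mpr hyy.ne'
  set t := (x-x0)/(x1-x0) with hts
  set u := (y-y0)/(y1-y0) with hus
  have hx' : x = x0 + t*(x1-x0) := by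
    rw [hts, div_mul_cancel₀ _ hne]; ring
  have hy' : y = y0 + u*(y1-y0) := by
    rw [hus, div_mul_cancel₀ _ hne']; ring
  refine ⟨t, u, div_nonneg (by linarith) (by linarith),
    div_le_one_of_le₀ (by linarith) (by linarith), div_nonneg (by linarith) (by linarith),
    div_le_one_of_le₀ (by linarith) (by linarith), ?_⟩
  rw [hx', hy']
  exact bilin_combo' ..

set_option maxHeartbeats 1000000 in
lemma bilin_bound {a b c d x0 x1 y0 y1 x y σ : ℝ}
    (hx0 : x0 ≤ x) (hx1 : x ≤ x1) (hy0 : y0 ≤ y) (hy1 : y ≤ y1)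
    (hxx : x0 < x1) (hyy : y0 < y1)
    (h00 : |a + b*x0 + c*y0 + d*x0*y0| ≤ σ)
    (h10 : |a + b*x1 + c*y0 + d*x1*y0| ≤ σ)
    (h01 : |a + b*x0 + c*y1 + d*x0*y1| ≤ σ)
    (h11 : |a + b*x1 + c*y1 + d*x1*y1| ≤ σ) :
    |a + b*x + c*y + d*x*y| ≤ σ := by
  obtain ⟨t, u, ht0, ht1, hu0, hu1, heq⟩ :=
    bilin_combo a b c d x0 x1 y0 y1 x y hx0 hx1 hy0 hy1 hxx hyy
  rw [abs_le] at h00 h10 h01 h11 ⊢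
  have w00 : (0:ℝ) ≤ (1-t)*(1-u) := by nlinarith
  have w10 : (0:ℝ) ≤ t*(1-u) := by nlinarith
  have w01 : (0:ℝ) ≤ (1-t)*u := by nlinarith
  have w11 : (0:ℝ) ≤ t*u := by nlinarith
  constructor <;> rw [heq]
  · nlinarith [mul_le_mul_of_nonneg_left h00.1 w00, mul_le_mul_of_nonneg_left h10.1 w10,
      mul_le_mul_of_nonneg_left h01.1 w01, mul_le_mul_of_nonneg_left h11.1 w11]
  · nlinarith [mul_le_mul_of_nonneg_left h00.2 w00, mul_le_mul_of_nonneg_left h10.2 w10,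
      mul_le_mul_of_nonneg_left h01.2 w01, mul_le_mul_of_nonneg_left h11.2 w11]

/-! ### Bilinear functions on cells -/

lemma corner_mem {x0 x1 y0 y1 : ℝ} (hxx : x0 ≤ x1) (hyy : y0 ≤ y1) :
    (x0, y0) ∈ Icc x0 x1 ×ˢ Icc y0 y1 ∧ (x1, y0) ∈ Icc x0 x1 ×ˢ Icc y0 y1 ∧
    (x0, y1) ∈ Icc x0 x1 ×ˢ Icc y0 y1 ∧ (x1, y1) ∈ Icc x0 x1 ×ˢ Icc y0 y1 :=
  ⟨⟨⟨le_refl _, hxx⟩, ⟨le_refl _, hyy⟩⟩, ⟨⟨hxx, le_refl _⟩, ⟨le_refl _, hyy⟩⟩,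
   ⟨⟨le_refl _, hxx⟩, ⟨hyy, le_refl _⟩⟩, ⟨⟨hxx, le_refl _⟩, ⟨hyy, le_refl _⟩⟩⟩

lemma bilin_abs_le {x0 x1 y0 y1 σ : ℝ} (hxx : x0 < x1) (hyy : y0 < y1) {F : ℝ × ℝ → ℝ}
    (hF : IsBilinearOn F (Icc x0 x1 ×ˢ Icc y0 y1))
    (h00 : |F (x0, y0)| ≤ σ) (h10 : |F (x1, y0)| ≤ σ)
    (h01 : |F (x0, y1)| ≤ σ) (h11 : |F (x1, y1)| ≤ σ) :
    ∀ p ∈ Icc x0 x1 ×ˢ Icc y0 y1, |F p| ≤ σ := by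
  obtain ⟨a, b, c, d, hco⟩ := hF
  obtain ⟨m00, m10, m01, m11⟩ := corner_mem hxx.le hyy.le
  intro p hp
  rw [hco p hp]
  rw [hco _ m00] at h00; rw [hco _ m10] at h10
  rw [hco _ m01] at h01; rw [hco _ m11] at h11
  exact bilin_bound hp.1.1 hp.1.2 hp.2.1 hp.2.2 hxx hyy h00 h10 h01 h11

lemma bilin_eq {x0 x1 y0 y1 : ℝ} (hxx : x0 < x1) (hyy : y0 < y1) {F G : ℝ × ℝ → ℝ}
    (hF : IsBilinearOn F (Icc x0 x1 ×ˢ Icc y0 y1)) (hG : IsBilinearOn G (Icc x0 x1 ×ˢ Icc y0 y1))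
    (h00 : F (x0, y0) = G (x0, y0)) (h10 : F (x1, y0) = G (x1, y0))
    (h01 : F (x0, y1) = G (x0, y1)) (h11 : F (x1, y1) = G (x1, y1)) :
    ∀ p ∈ Icc x0 x1 ×ˢ Icc y0 y1, F p = G p := by
  obtain ⟨a, b, c, d, hco⟩ := hF
  obtain ⟨a', b', c', d', hco'⟩ := hG
  have hFG : IsBilinearOn (fun p => F p - G p) (Icc x0 x1 ×ˢ Icc y0 y1) := by
    refine ⟨a - a', b - b', c - c', d - d', fun p hp => ?_⟩
    dsimp only
    rw [hco p hp, hco' p hp]; ring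
  intro p hp
  have := bilin_abs_le hxx hyy hFG (σ := 0)
    (by simp [h00]) (by simp [h10]) (by simp [h01]) (by simp [h11]) p hp
  have h0 : F p - G p = 0 := abs_eq_zero.mp (le_antisymm this (abs_nonneg _))
  linarith

/-! ### Grid lemmas -/

lemma xg_le {N : ℕ} (hN : 0 < N) {k l : ℕ} (h : k ≤ l) : xg N k ≤ xg N l := by
  unfold xg
  have h0 : (0:ℝ) < N := by exact_mod_cast hN
  have h1 : (k:ℝ) ≤ l := by exact_mod_cast h
  gcongr

lemma xg_lt {N : ℕ} (hN : 0 < N) {k l : ℕ} (h : k < l) : xg N k < xg N l := by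
  unfold xg
  have h0 : (0:ℝ) < N := by exact_mod_cast hN
  have h1 : (k:ℝ) < l := by exact_mod_cast h
  gcongr

lemma xg_pred {N i : ℕ} (hN : 0 < N) (hi : 1 ≤ i) : xg N (i - 1) = xg N i - 1 / N := by
  unfold xg
  rw [Nat.cast_sub hi]
  have : (N:ℝ) ≠ 0 := by positivity
  push_cast
  field_simp

lemma abs_grid {N K a b : ℕ} (hN : 0 < N) (h : |xg N a - xg N b| = (K:ℝ) * (1 / N)) :
    a = b + K ∨ b = a + K := by
  have hN' : (0:ℝ) < N := by exact_mod_cast hN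
  unfold xg at h
  rcases abs_cases ((a:ℝ)/N - (b:ℝ)/N) with ⟨he, _⟩ | ⟨he, _⟩
  · left
    have : (a:ℝ) = b + K := by rw [he] at h; field_simp at h; linarith
    exact_mod_cast this
  · right
    have : (b:ℝ) = a + K := by rw [he] at h; field_simp at h; linarith
    exact_mod_cast this

/-- locate a cell containing a point of `[x_a, x_{a+K}]` -/
lemma cell_locate {N : ℕ} (hN : 0 < N) {K a : ℕ} (hK : 1 ≤ K) (haK : a + K ≤ N) {x : ℝ}
    (hx : x ∈ Icc (xg N a) (xg N (a + K))) :
    ∃ p : ℕ, a + 1 ≤ p ∧ p ≤ a + K ∧ x ∈ Ii N p := by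
  induction K generalizing a with
  | zero => omega
  | succ K ih =>
    rcases Nat.eq_zero_or_pos K with rfl | hK'
    · exact ⟨a + 1, le_refl _, le_refl _, by
        simpa [Ii, Nat.add_sub_cancel] using hx⟩
    rcases le_or_gt x (xg N (a + 1)) with hle | hlt
    · exact ⟨a + 1, le_refl _, by omega, by
        simpa [Ii, Nat.add_sub_cancel] using ⟨hx.1, hle⟩⟩
    · obtain ⟨p, hp1, hp2, hp3⟩ := ih hK' (a := a + 1) (by omega)
        ⟨hlt.le, by rw [show a + 1 + K = a + (K + 1) by omega]; exact hx.2⟩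
      exact ⟨p, by omega, by omega, hp3⟩

lemma IsBilinearOn.mono {F : ℝ × ℝ → ℝ} {E E' : Set (ℝ × ℝ)} (h : IsBilinearOn F E)
    (hs : E' ⊆ E) : IsBilinearOn F E' := by
  obtain ⟨a, b, c, d, hco⟩ := h
  exact ⟨a, b, c, d, fun p hp => hco p (hs hp)⟩

lemma xg_nonneg {N k : ℕ} : 0 ≤ xg N k := by unfold xg; positivity

lemma xg_le_one {N k : ℕ} (hN : 0 < N) (h : k ≤ N) : xg N k ≤ 1 := by
  unfold xg
  have h0 : (0:ℝ) < N := by exact_mod_cast hN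
  rw [div_le_one h0]
  exact_mod_cast h

lemma Dij_subset_sq {N k l : ℕ} (hN : 0 < N) (hk : k ≤ N) (hl : l ≤ N) :
    Dij N k l ⊆ sq := by
  unfold Dij sq Ii
  exact prod_mono (Icc_subset_Icc xg_nonneg (xg_le_one hN hk))
    (Icc_subset_Icc xg_nonneg (xg_le_one hN hl))

lemma xg_sub {N k : ℕ} (hN : 0 < N) (hk : 1 ≤ k) : xg N k - xg N (k - 1) = 1 / N := by
  rw [xg_pred hN hk]; ring

/-- `I'_k` is a grid interval of length `K/N`. -/
lemma Iip_eq {N K : ℕ} (hN : 0 < N) {px : ℕ → ℕ} {k : ℕ} (hk1 : 1 ≤ k)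
    (hpk : px k ≤ N) (hpk1 : px (k - 1) ≤ N)
    (hstep : |xp N px k - xp N px (k - 1)| = (K : ℝ) * (xg N k - xg N (k - 1))) :
    ∃ a : ℕ, a + K ≤ N ∧ Ii' N px k = Icc (xg N a) (xg N (a + K)) := by
  rw [xg_sub hN hk1] at hstep
  have habs : |xg N (px k) - xg N (px (k - 1))| = (K : ℝ) * (1 / N) := hstep
  rcases abs_grid hN habs with he | he
  · refine ⟨px (k - 1), by omega, ?_⟩
    unfold Ii' xp
    rw [uIcc_of_le (xg_le hN (by omega))]
    rw [show px (k-1) + K = px k from by omega]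
  · refine ⟨px k, by omega, ?_⟩
    unfold Ii' xp
    rw [uIcc_of_ge (xg_le hN (by omega))]
    rw [show px k + K = px (k-1) from by omega]

/-- `u_k : I'_k → I_k` is surjective. -/
lemma usub_surj {N K : ℕ} (hN : 0 < N) (hK : 0 < K) {px : ℕ → ℕ} {k : ℕ} (hk1 : 1 ≤ k)
    (hstep : |xp N px k - xp N px (k - 1)| = (K : ℝ) * (xg N k - xg N (k - 1)))
    {ξ : ℝ} (hξ : ξ ∈ Ii N k) :
    ∃ t ∈ Ii' N px k, usub N px k t = ξ := by
  have hN' : (0:ℝ) < N := by exact_mod_cast hN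
  have hK' : (0:ℝ) < K := by exact_mod_cast hK
  set A := xp N px (k - 1) with hA
  set B := xp N px k with hB
  set G := xg N (k - 1) with hG
  have hsub : xg N k - G = 1 / N := xg_sub hN hk1
  have habs : |B - A| = (K:ℝ) * (1/N) := by rw [← hsub]; exact hstep
  have he : B - A ≠ 0 := by
    intro h0
    rw [h0, abs_zero] at habs
    have : (0:ℝ) < (K:ℝ) * (1/N) := by positivity
    linarith
  set lam := (ξ - G) * N with hlam
  have hξ1 : G ≤ ξ := hξ.1
  have hξ2 : ξ ≤ xg N k := hξ.2
  have hlam0 : 0 ≤ lam := by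
    rw [hlam]; exact mul_nonneg (by linarith) hN'.le
  have hlam1 : lam ≤ 1 := by
    rw [hlam]
    have : ξ - G ≤ 1 / N := by linarith
    calc (ξ - G) * N ≤ (1/N) * N := by gcongr
    _ = 1 := by field_simp
  refine ⟨A + lam * (B - A), ?_, ?_⟩
  · rcases le_total A B with hAB | hAB
    · rw [Ii', ← hA, ← hB, uIcc_of_le hAB]
      constructor
      · nlinarith
      · nlinarith
    · rw [Ii', ← hA, ← hB, uIcc_of_ge hAB]
      constructor
      · nlinarith
      · nlinarith
  · unfold usub
    rw [← hA, ← hB, ← hG, hsub, hlam]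
    field_simp
    ring

/-- locate a grid cell inside `D'_{kl}` containing a given point. -/
lemma cell_in_Dij' {N K : ℕ} (hN : 0 < N) (hK : 0 < K) {px py : ℕ → ℕ} {k l : ℕ}
    (hk1 : 1 ≤ k) (hl1 : 1 ≤ l)
    (hpk : px k ≤ N) (hpk1 : px (k - 1) ≤ N) (hpl : py l ≤ N) (hpl1 : py (l - 1) ≤ N)
    (hstepx : |xp N px k - xp N px (k - 1)| = (K : ℝ) * (xg N k - xg N (k - 1)))
    (hstepy : |xp N py l - xp N py (l - 1)| = (K : ℝ) * (xg N l - xg N (l - 1)))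
    {w : ℝ × ℝ} (hw : w ∈ Dij' N px py k l) :
    ∃ p q : ℕ, 1 ≤ p ∧ p ≤ N ∧ 1 ≤ q ∧ q ≤ N ∧ w ∈ Dij N p q ∧
      Dij N p q ⊆ Dij' N px py k l := by
  obtain ⟨a, haK, hIa⟩ := Iip_eq hN hk1 hpk hpk1 hstepx
  obtain ⟨b, hbK, hIb⟩ := Iip_eq hN hl1 hpl hpl1 hstepy
  have hw1 : w.1 ∈ Icc (xg N a) (xg N (a + K)) := by rw [← hIa]; exact hw.1
  have hw2 : w.2 ∈ Icc (xg N b) (xg N (b + K)) := by rw [← hIb]; exact hw.2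
  obtain ⟨p, hp1, hp2, hp3⟩ := cell_locate hN hK haK hw1
  obtain ⟨q, hq1, hq2, hq3⟩ := cell_locate hN hK hbK hw2
  refine ⟨p, q, by omega, by omega, by omega, by omega, ⟨hp3, hq3⟩, ?_⟩
  unfold Dij
  rw [Dij', hIa, hIb]
  refine prod_mono ?_ ?_
  · unfold Ii
    exact Icc_subset_Icc (xg_le hN (by omega)) (xg_le hN (by omega))
  · unfold Ii
    exact Icc_subset_Icc (xg_le hN (by omega)) (xg_le hN (by omega))

/-- extend an ancestor chain by one step. -/
lemma anc_extend (st : Setup) {i j k l p q : ℕ}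
    (hi1 : 1 ≤ i) (hiN : i ≤ st.N) (hj1 : 1 ≤ j) (hjN : j ≤ st.N)
    (hp1 : 1 ≤ p) (hpN : p ≤ st.N) (hq1 : 1 ≤ q) (hqN : q ≤ st.N)
    (hm : (k, l) ∈ AncSet st i j)
    (hsub : Dij st.N p q ⊆ Dij' st.N st.px st.py k l) :
    (p, q) ∈ AncSet st i j := by
  rcases hm with hm | hm
  · -- (k,l) = (i,j)
    have hkl : k = i ∧ l = j := by
      simpa [Prod.ext_iff] using hm
    right
    refine ⟨1, le_refl _, fun τ => if τ = 0 then (i, j) else (p, q), by simp, by simp, ?_, ?_⟩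
    · intro τ hτ
      interval_cases τ <;> simp [hi1, hiN, hj1, hjN, hp1, hpN, hq1, hqN]
    · intro τ hτ1 hτ2
      have : τ = 1 := by omega
      subst this
      simpa [hkl.1, hkl.2] using hsub
  · obtain ⟨n, hn, c, hc0, hcn, hbd, hchain⟩ := hm
    right
    refine ⟨n + 1, by omega, fun τ => if τ ≤ n then c τ else (p, q), by simp [hc0],
      by simp, ?_, ?_⟩
    · intro τ hτ
      by_cases hτn : τ ≤ n
      · simpa [hτn] using hbd τ hτn
      · simp only [if_neg hτn]
        exact ⟨hp1, hpN, hq1, hqN⟩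
    · intro τ hτ1 hτ2
      by_cases hτn : τ ≤ n
      · have hτ1n : τ - 1 ≤ n := by omega
        simpa [hτn, hτ1n] using hchain τ hτ1 hτn
      · have hτe : τ = n + 1 := by omega
        subst hτe
        simp only [Nat.add_sub_cancel, if_pos (le_refl n),
          if_neg (by omega : ¬ n + 1 ≤ n), hcn]
        exact hsub

/-! ### The uniform scaling bound σ -/

def sigma0 (st : Setup) : ℝ :=
  (Finset.Icc 0 st.N ×ˢ Finset.Icc 0 st.N).sup' (by simp) fun ij => |st.s ij.1 ij.2|

lemma abs_s_le_sigma0 (st : Setup) {a b : ℕ} (ha : a ≤ st.N) (hb : b ≤ st.N) :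
    |st.s a b| ≤ sigma0 st :=
  Finset.le_sup' (f := fun ij => |st.s ij.1 ij.2|)
    (by simp [ha, hb] : (a, b) ∈ Finset.Icc 0 st.N ×ˢ Finset.Icc 0 st.N)

lemma sigma0_nonneg (st : Setup) : 0 ≤ sigma0 st :=
  (abs_nonneg _).trans (abs_s_le_sigma0 st (Nat.zero_le _) (Nat.zero_le _))

lemma sigma0_lt_one (st : Setup) : sigma0 st < 1 := by
  rw [sigma0, Finset.sup'_lt_iff]
  rintro ⟨a, b⟩ hab
  simp only [Finset.mem_product, Finset.mem_Icc] at hab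
  exact st.hs a hab.1.2 b hab.2.2

lemma st_N0 (st : Setup) : 0 < st.N := by have := st.hN; omega
lemma st_K0 (st : Setup) : 0 < st.K := by have := st.hK; omega

lemma Dij_eq (N k l : ℕ) :
    Dij N k l = Icc (xg N (k-1)) (xg N k) ×ˢ Icc (xg N (l-1)) (xg N l) := rfl

lemma S_bound (st : Setup) {k l : ℕ} (hk1 : 1 ≤ k) (hkN : k ≤ st.N) (hl1 : 1 ≤ l)
    (hlN : l ≤ st.N) : ∀ p ∈ Dij st.N k l, |st.S p| ≤ sigma0 st := by
  have hxx : xg st.N (k-1) < xg st.N k := xg_lt (st_N0 st) (by omega)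
  have hyy : xg st.N (l-1) < xg st.N l := xg_lt (st_N0 st) (by omega)
  intro p hp
  have hb := st.hSbil k l hk1 hkN hl1 hlN
  rw [Dij_eq] at hb hp
  refine bilin_abs_le hxx hyy hb ?_ ?_ ?_ ?_ p hp
  · rw [st.hSval _ (by omega) _ (by omega)]; exact abs_s_le_sigma0 st (by omega) (by omega)
  · rw [st.hSval _ (by omega) _ (by omega)]; exact abs_s_le_sigma0 st (by omega) (by omega)
  · rw [st.hSval _ (by omega) _ (by omega)]; exact abs_s_le_sigma0 st (by omega) (by omega)
  · rw [st.hSval _ (by omega) _ (by omega)]; exact abs_s_le_sigma0 st (by omega) (by omega)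

/-- In the degenerate zero-scaling case, `S` vanishes on the whole cell. -/
lemma S_zero (st : Setup) {k l : ℕ} (hk1 : 1 ≤ k) (hkN : k ≤ st.N) (hl1 : 1 ≤ l)
    (hlN : l ≤ st.N)
    (h0 : st.s (k-1) (l-1) = 0 ∧ st.s (k-1) l = 0 ∧ st.s k (l-1) = 0 ∧ st.s k l = 0) :
    ∀ p ∈ Dij st.N k l, st.S p = 0 := by
  have hxx : xg st.N (k-1) < xg st.N k := xg_lt (st_N0 st) (by omega)
  have hyy : xg st.N (l-1) < xg st.N l := xg_lt (st_N0 st) (by omega)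
  have hb := st.hSbil k l hk1 hkN hl1 hlN
  rw [Dij_eq] at hb
  intro p hp
  rw [Dij_eq] at hp
  have := bilin_abs_le (σ := 0) hxx hyy hb
    (by rw [st.hSval _ (by omega) _ (by omega), h0.1]; simp)
    (by rw [st.hSval _ (by omega) _ (by omega), h0.2.2.1]; simp)
    (by rw [st.hSval _ (by omega) _ (by omega), h0.2.1]; simp)
    (by rw [st.hSval _ (by omega) _ (by omega), h0.2.2.2]; simp)
    p hp
  exact abs_eq_zero.mp (le_antisymm this (abs_nonneg _))

/-- **Key step.**  On a degenerate cell the RFIF coincides with the piecewise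
bilinear interpolant `h`. -/
theorem f_eq_h_on_deg (st : Setup) {i j : ℕ}
    (hi1 : 1 ≤ i) (hiN : i ≤ st.N) (hj1 : 1 ≤ j) (hjN : j ≤ st.N)
    (hdeg : DegenPair st i j) :
    ∀ p ∈ Dij st.N i j, st.f p = st.h p := by
  have hN0 := st_N0 st
  have hK0 := st_K0 st
  obtain ⟨M₀, hM₀0, hM₀⟩ : ∃ M, 0 ≤ M ∧ ∀ p ∈ sq, |st.f p - st.h p| ≤ M := by
    have hcpt : IsCompact sq := (isCompact_Icc).prod (isCompact_Icc)
    obtain ⟨C, hC⟩ := hcpt.exists_bound_of_continuousOn (st.hfcont.sub st.hhcont)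
    refine ⟨max C 0, le_max_right _ _, fun p hp => ?_⟩
    calc |st.f p - st.h p| = ‖(fun q => st.f q - st.h q) p‖ := by rw [Real.norm_eq_abs]
    _ ≤ C := hC p hp
    _ ≤ max C 0 := le_max_left _ _
  have key : ∀ n : ℕ, ∀ k l : ℕ, 1 ≤ k → k ≤ st.N → 1 ≤ l → l ≤ st.N →
      (k, l) ∈ AncSet st i j → ∀ p ∈ Dij st.N k l,
      |st.f p - st.h p| ≤ sigma0 st ^ n * M₀ := by
    intro n
    induction n with
    | zero =>
      intro k l hk1 hkN hl1 hlN _ p hp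
      simpa using hM₀ p (Dij_subset_sq hN0 hkN hlN hp)
    | succ n ih =>
      intro k l hk1 hkN hl1 hlN hmem p hp
      obtain ⟨x, hx, hux⟩ := usub_surj hN0 hK0 hk1 (st.hKx k hk1 hkN) hp.1
      obtain ⟨y, hy, huy⟩ := usub_surj hN0 hK0 hl1 (st.hKy l hl1 hlN) hp.2
      have hpd : (x, y) ∈ Dij' st.N st.px st.py k l := ⟨hx, hy⟩
      have hfe := st.hfeq k l hk1 hkN hl1 hlN (x, y) hpd
      simp only at hfe
      have hpe : p = (usub st.N st.px k x, usub st.N st.py l y) := by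
        rw [hux, huy]
      rcases hdeg (k, l) hmem with hzero | hgrid
      · have hS0 : st.S p = 0 := S_zero st hk1 hkN hl1 hlN hzero p hp
        have : st.f p = st.h p := by
          rw [hpe, hfe, ← hpe, hS0, zero_mul, zero_add]
        rw [this, sub_self, abs_zero]
        exact mul_nonneg (pow_nonneg (sigma0_nonneg st) _) hM₀0
      · obtain ⟨pp, qq, hpp1, hppN, hqq1, hqqN, hwmem, hwsub⟩ :=
          cell_in_Dij' hN0 hK0 hk1 hl1 (st.hpx k hkN) (st.hpx (k-1) (by omega))
            (st.hpy l hlN) (st.hpy (l-1) (by omega)) (st.hKx k hk1 hkN)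
            (st.hKy l hl1 hlN) hpd
        have hanc : (pp, qq) ∈ AncSet st i j :=
          anc_extend st hi1 hiN hj1 hjN hpp1 hppN hqq1 hqqN hmem hwsub
        -- g k l = h on the cell D_{pp,qq}
        have hgh : st.g k l (x, y) = st.h (x, y) := by
          have hxx : xg st.N (pp-1) < xg st.N pp := xg_lt hN0 (by omega)
          have hyy : xg st.N (qq-1) < xg st.N qq := xg_lt hN0 (by omega)
          have hgb : IsBilinearOn (st.g k l)
              (Icc (xg st.N (pp-1)) (xg st.N pp) ×ˢ Icc (xg st.N (qq-1)) (xg st.N qq)) := by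
            have := (st.hgbil k l hk1 hkN hl1 hlN).mono hwsub
            rwa [Dij_eq] at this
          have hhb : IsBilinearOn st.h
              (Icc (xg st.N (pp-1)) (xg st.N pp) ×ˢ Icc (xg st.N (qq-1)) (xg st.N qq)) := by
            have := st.hhbil pp qq hpp1 hppN hqq1 hqqN
            rwa [Dij_eq] at this
          obtain ⟨m00, m10, m01, m11⟩ := corner_mem hxx.le hyy.le
          have hcor : ∀ u v : ℕ, u ≤ st.N → v ≤ st.N →
              (xg st.N u, xg st.N v) ∈ Dij st.N pp qq →
              st.g k l (xg st.N u, xg st.N v) = st.h (xg st.N u, xg st.N v) := by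
            intro u v hu hv hmem'
            rw [st.hhval u hu v hv, ← hgrid u hu v hv (hwsub hmem')]
          have heq := bilin_eq hxx hyy hgb hhb
            (hcor (pp-1) (qq-1) (by omega) (by omega) (by rw [Dij_eq]; exact m00))
            (hcor pp (qq-1) (by omega) (by omega) (by rw [Dij_eq]; exact m10))
            (hcor (pp-1) qq (by omega) (by omega) (by rw [Dij_eq]; exact m01))
            (hcor pp qq (by omega) (by omega) (by rw [Dij_eq]; exact m11))
          have hwm : (x, y) ∈ Icc (xg st.N (pp-1)) (xg st.N pp)
              ×ˢ Icc (xg st.N (qq-1)) (xg st.N qq) := by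
            rw [← Dij_eq]; exact hwmem
          exact heq (x, y) hwm
        have hih := ih pp qq hpp1 hppN hqq1 hqqN hanc (x, y) hwmem
        have hSb := S_bound st hk1 hkN hl1 hlN p hp
        have hcalc : st.f p - st.h p = st.S p * (st.f (x, y) - st.h (x, y)) := by
          rw [hpe, hfe, ← hpe, hgh]
          ring
        rw [hcalc, abs_mul, pow_succ, mul_comm (sigma0 st ^ n) (sigma0 st), mul_assoc]
        exact mul_le_mul hSb hih (abs_nonneg _) (sigma0_nonneg st)
  intro p hp
  have hmem : (i, j) ∈ AncSet st i j := Or.inl rfl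
  have hall : ∀ n : ℕ, |st.f p - st.h p| ≤ sigma0 st ^ n * M₀ := fun n =>
    key n i j hi1 hiN hj1 hjN hmem p hp
  have hlim : Tendsto (fun n : ℕ => sigma0 st ^ n * M₀) atTop (nhds 0) := by
    have := tendsto_pow_atTop_nhds_zero_of_lt_one (sigma0_nonneg st) (sigma0_lt_one st)
    simpa using this.mul_const M₀
  have h0 : |st.f p - st.h p| ≤ 0 := ge_of_tendsto' hlim hall
  have := abs_nonneg (st.f p - st.h p)
  have : st.f p - st.h p = 0 := abs_eq_zero.mp (le_antisymm h0 (abs_nonneg _))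
  linarith

/-! ### Lipschitz estimate for bilinear functions, and the oscillation sum bound -/

lemma bilin_lip {F : ℝ × ℝ → ℝ} {E : Set (ℝ × ℝ)} (hE : E ⊆ sq) (hF : IsBilinearOn F E) :
    ∃ L : ℝ, 0 ≤ L ∧ ∀ p ∈ E, ∀ q ∈ E, |F p - F q| ≤ L * (|p.1 - q.1| + |p.2 - q.2|) := by
  obtain ⟨a, b, c, d, hco⟩ := hF
  refine ⟨|b| + |c| + 2 * |d|, by positivity, fun p hp q hq => ?_⟩
  have hp1 : |p.1| ≤ 1 := abs_le.mpr ⟨by linarith [(hE hp).1.1], (hE hp).1.2⟩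
  have hq2 : |q.2| ≤ 1 := abs_le.mpr ⟨by linarith [(hE hq).2.1], (hE hq).2.2⟩
  rw [hco p hp, hco q hq]
  have key : a + b * p.1 + c * p.2 + d * p.1 * p.2 - (a + b * q.1 + c * q.2 + d * q.1 * q.2)
      = b * (p.1 - q.1) + c * (p.2 - q.2) + d * (p.1 * (p.2 - q.2)) + d * (q.2 * (p.1 - q.1)) := by
    ring
  rw [key]
  have t1 : |b * (p.1 - q.1)| = |b| * |p.1 - q.1| := abs_mul _ _
  have t2 : |c * (p.2 - q.2)| = |c| * |p.2 - q.2| := abs_mul _ _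
  have t3 : |d * (p.1 * (p.2 - q.2))| ≤ |d| * |p.2 - q.2| := by
    rw [abs_mul, abs_mul]
    have h1 := abs_nonneg (p.2 - q.2)
    have h2 := abs_nonneg d
    nlinarith [mul_le_mul_of_nonneg_left (mul_le_mul_of_nonneg_right hp1 h1) h2]
  have t4 : |d * (q.2 * (p.1 - q.1))| ≤ |d| * |p.1 - q.1| := by
    rw [abs_mul, abs_mul]
    have h1 := abs_nonneg (p.1 - q.1)
    have h2 := abs_nonneg d
    nlinarith [mul_le_mul_of_nonneg_left (mul_le_mul_of_nonneg_right hq2 h1) h2]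
  have habs : |b * (p.1 - q.1) + c * (p.2 - q.2) + d * (p.1 * (p.2 - q.2))
      + d * (q.2 * (p.1 - q.1))|
      ≤ |b * (p.1 - q.1)| + |c * (p.2 - q.2)| + |d * (p.1 * (p.2 - q.2))|
        + |d * (q.2 * (p.1 - q.1))| :=
    (abs_add_le _ _).trans (add_le_add ((abs_add_le _ _).trans
      (add_le_add (abs_add_le _ _) (le_refl _))) (le_refl _))
  have h5 := abs_nonneg (p.1 - q.1)
  have h6 := abs_nonneg (p.2 - q.2)
  have h7 := abs_nonneg d
  have h8 := abs_nonneg b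
  have h9 := abs_nonneg c
  nlinarith [habs, mul_nonneg h8 h6, mul_nonneg h9 h5, mul_nonneg h7 h5, mul_nonneg h7 h6]

/-- the oscillation of a coordinate-Lipschitz function on a small square -/
lemma osc_le {f : ℝ × ℝ → ℝ} {E : Set (ℝ × ℝ)} {L : ℝ} (hL : 0 ≤ L)
    (hlip : ∀ p ∈ E, ∀ q ∈ E, |f p - f q| ≤ L * (|p.1 - q.1| + |p.2 - q.2|))
    {a1 a2 b1 b2 w : ℝ} (hw : 0 ≤ w) (ha : a2 - a1 ≤ w) (hb : b2 - b1 ≤ w)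
    (hsub : Icc a1 a2 ×ˢ Icc b1 b2 ⊆ E) :
    Osc f (Icc a1 a2 ×ˢ Icc b1 b2) ≤ 2 * L * w := by
  apply Real.sSup_le
  · rintro x ⟨p, hp, q, hq, rfl⟩
    have h1 : |p.1 - q.1| ≤ w := abs_le.mpr ⟨by linarith [hp.1.1, hq.1.2], by linarith [hp.1.2, hq.1.1]⟩
    have h2 : |p.2 - q.2| ≤ w := abs_le.mpr ⟨by linarith [hp.2.1, hq.2.2], by linarith [hp.2.2, hq.2.1]⟩
    have := hlip p (hsub hp) q (hsub hq)
    have := le_abs_self (f p - f q)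
    nlinarith
  · positivity

/-- **Part (a) bound.**  The oscillation sum over level-`n` squares of a
coordinate-Lipschitz function grows at most like `Kⁿ`. -/
lemma oscSum_le {f : ℝ × ℝ → ℝ} {N K : ℕ} (hN : 0 < N) (hK : 0 < K) {E : Set (ℝ × ℝ)}
    {L : ℝ} (hL : 0 ≤ L)
    (hlip : ∀ p ∈ E, ∀ q ∈ E, |f p - f q| ≤ L * (|p.1 - q.1| + |p.2 - q.2|)) (n : ℕ) :
    OscSum f N K n E ≤ (2 * L * N + 1) * (K : ℝ) ^ n := by
  classical
  have hKN : (0:ℝ) < (K : ℝ) ^ n * N := by positivity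
  set w : ℝ := 1 / ((K : ℝ) ^ n * N) with hwdef
  have hw : 0 ≤ w := by positivity
  have hterm : ∀ k l : ℕ,
      (if Dn N K n k l ⊆ E then Osc f (Dn N K n k l) else 0) ≤ 2 * L * w := by
    intro k l
    split
    · next hsub =>
      refine osc_le hL hlip hw ?_ ?_ hsub
      · rw [hwdef, div_sub_div_same]; norm_num
      · rw [hwdef, div_sub_div_same]; norm_num
    · positivity
  have hcast : ((K ^ n * N : ℕ) : ℝ) = (K : ℝ) ^ n * N := by push_cast; ring
  have hNR : (0:ℝ) < (N:ℝ) := by exact_mod_cast hN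
  have hKR : (0:ℝ) < (K:ℝ) := by exact_mod_cast hK
  calc OscSum f N K n E
      ≤ ∑ _k ∈ Finset.Icc 1 (K ^ n * N), ∑ _l ∈ Finset.Icc 1 (K ^ n * N), 2 * L * w := by
        refine Finset.sum_le_sum fun k _ => Finset.sum_le_sum fun l _ => hterm k l
    _ = ((K:ℝ) ^ n * N) * (((K:ℝ) ^ n * N) * (2 * L * w)) := by
        simp only [Finset.sum_const, Nat.card_Icc, Nat.add_sub_cancel, nsmul_eq_mul, hcast]
    _ = 2 * L * ((K:ℝ) ^ n * N) := by
        rw [hwdef]; field_simp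
    _ ≤ (2 * L * N + 1) * (K : ℝ) ^ n := by
        have hpow : (0:ℝ) < (K:ℝ) ^ n := pow_pos hKR n
        nlinarith

/-! ### Box-counting estimates -/

lemma toNat_cast_real {z : ℤ} (h : 0 ≤ z) : ((z.toNat : ℕ) : ℝ) = (z : ℝ) := by
  exact_mod_cast congrArg (fun t : ℤ => (t : ℝ)) (Int.toNat_of_nonneg h)

lemma clamp_mem {a b c : ℝ} (hab : a ≤ b) : min (max c a) b ∈ Icc a b :=
  ⟨le_min (le_max_right _ _) hab, min_le_right _ _⟩

lemma clamp_close {a b c x ε : ℝ} (hε : 0 ≤ ε) (hx : x ∈ Icc a b)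
    (hc1 : c ≤ x) (hc2 : x ≤ c + ε) : |x - min (max c a) b| ≤ ε := by
  have h1 : min (max c a) b ≤ x := by
    rcases le_total c a with h | h
    · rw [max_eq_right h]; exact (min_le_left _ _).trans hx.1
    · rw [max_eq_left h]; exact (min_le_left _ _).trans hc1
  have h2 : x - ε ≤ min (max c a) b :=
    le_min ((by linarith : x - ε ≤ c).trans (le_max_left _ _)) (by linarith [hx.2])
  rw [abs_le]; constructor <;> linarith

lemma kset_upper {f : ℝ × ℝ → ℝ} {x0 y0 δ L : ℝ} (hδ : 0 < δ) (hL : 0 ≤ L)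
    (hsq : Icc x0 (x0+δ) ×ˢ Icc y0 (y0+δ) ⊆ sq)
    (hlip : ∀ p ∈ Icc x0 (x0+δ) ×ˢ Icc y0 (y0+δ), ∀ q ∈ Icc x0 (x0+δ) ×ˢ Icc y0 (y0+δ),
      |f p - f q| ≤ L * (|p.1 - q.1| + |p.2 - q.2|))
    {ε : ℝ} (hε : 0 < ε) (hε1 : ε ≤ 1) :
    {k : ℤ × ℤ × ℤ | (cube ε k ∩ graphOn f (Icc x0 (x0+δ) ×ˢ Icc y0 (y0+δ))).Nonempty}.Finite ∧
    (Ncubes (graphOn f (Icc x0 (x0+δ) ×ˢ Icc y0 (y0+δ))) ε : ℝ) ≤ 16 * (4*L+5) / ε^2 := by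
  classical
  set E := Icc x0 (x0+δ) ×ˢ Icc y0 (y0+δ) with hE
  set I1 : Finset ℤ := Finset.Icc (-1) ⌈1/ε⌉ with hI1
  set qf : ℤ → ℤ → ℝ × ℝ :=
    fun a b => (min (max ((a:ℝ)*ε) x0) (x0+δ), min (max ((b:ℝ)*ε) y0) (y0+δ)) with hqf
  set m : ℤ → ℤ → ℤ := fun a b => ⌊f (qf a b) / ε⌋ with hm
  set Bc : ℤ := ⌈2*L⌉ + 1 with hBcdef
  have hBc : 2*L + 1 ≤ (Bc:ℝ) := by
    rw [hBcdef]; push_cast; linarith [Int.le_ceil (2*L)]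
  set T : Finset (ℤ × ℤ × ℤ) := I1.biUnion
    (fun a => I1.biUnion
      (fun b => {a} ×ˢ ({b} ×ˢ Finset.Icc (m a b - Bc) (m a b + Bc)))) with hT
  have hsubT : {k : ℤ × ℤ × ℤ | (cube ε k ∩ graphOn f E).Nonempty} ⊆ ↑T := by
    rintro ⟨k1, k2, k3⟩ ⟨w, hwc, hwG⟩
    obtain ⟨p, hp, rfl⟩ := hwG
    have hc1 : (k1:ℝ)*ε ≤ p.1 ∧ p.1 ≤ ((k1:ℝ)+1)*ε := ⟨hwc.1.1, hwc.1.2⟩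
    have hc2 : (k2:ℝ)*ε ≤ p.2 ∧ p.2 ≤ ((k2:ℝ)+1)*ε := ⟨hwc.2.1.1, hwc.2.1.2⟩
    have hc3 : (k3:ℝ)*ε ≤ f p ∧ f p ≤ ((k3:ℝ)+1)*ε := ⟨hwc.2.2.1, hwc.2.2.2⟩
    have hp1 : p.1 ∈ Icc (0:ℝ) 1 := (hsq hp).1
    have hp2 : p.2 ∈ Icc (0:ℝ) 1 := (hsq hp).2
    have hmemI : ∀ k : ℤ, (k:ℝ)*ε ≤ 1 → 0 ≤ ((k:ℝ)+1)*ε → k ∈ I1 := by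
      intro k hk1 hk2
      rw [hI1, Finset.mem_Icc]
      constructor
      · have h0 : (0:ℝ) ≤ (k:ℝ)+1 := le_of_mul_le_mul_right (by linarith) hε
        have : (-1:ℝ) ≤ (k:ℝ) := by linarith
        exact_mod_cast this
      · have h0 : (k:ℝ) ≤ 1/ε := (le_div_iff₀ hε).mpr hk1
        have : (k:ℝ) ≤ (⌈1/ε⌉:ℝ) := h0.trans (Int.le_ceil _)
        exact_mod_cast this
    have hk1I : k1 ∈ I1 := hmemI k1 (hc1.1.trans hp1.2) (le_trans hp1.1 hc1.2)
    have hk2I : k2 ∈ I1 := hmemI k2 (hc2.1.trans hp2.2) (le_trans hp2.1 hc2.2)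
    have hqE : qf k1 k2 ∈ E := ⟨clamp_mem (by linarith), clamp_mem (by linarith)⟩
    have hd1 : |p.1 - (qf k1 k2).1| ≤ ε :=
      clamp_close hε.le hp.1 hc1.1 (by linarith [hc1.2])
    have hd2 : |p.2 - (qf k1 k2).2| ≤ ε :=
      clamp_close hε.le hp.2 hc2.1 (by linarith [hc2.2])
    have hfpq : |f p - f (qf k1 k2)| ≤ 2*L*ε := by
      have h := hlip p hp (qf k1 k2) hqE
      have h2 : L * (|p.1 - (qf k1 k2).1| + |p.2 - (qf k1 k2).2|) ≤ L * (ε + ε) :=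
        mul_le_mul_of_nonneg_left (add_le_add hd1 hd2) hL
      nlinarith
    have hfq1 : f (qf k1 k2) < ((m k1 k2 : ℝ)+1)*ε := by
      have h := Int.lt_floor_add_one (f (qf k1 k2) / ε)
      rw [div_lt_iff₀ hε] at h
      simpa only [hm] using h
    have hfq2 : (m k1 k2 : ℝ)*ε ≤ f (qf k1 k2) := by
      have h := Int.floor_le (f (qf k1 k2) / ε)
      rw [le_div_iff₀ hε] at h
      simpa only [hm] using h
    have habs := abs_le.mp hfpq
    have hBce := mul_le_mul_of_nonneg_right hBc hε.le
    have hub : k3 ≤ m k1 k2 + Bc := by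
      have hr : (k3:ℝ)*ε < ((m k1 k2 : ℝ) + Bc)*ε := by nlinarith
      have h2 : (k3:ℝ) < ((m k1 k2 + Bc : ℤ):ℝ) := by
        push_cast
        exact lt_of_mul_lt_mul_right hr hε.le
      have h3 : k3 < m k1 k2 + Bc := by exact_mod_cast h2
      omega
    have hlb : m k1 k2 - Bc ≤ k3 := by
      have hr : (m k1 k2 : ℝ)*ε ≤ ((k3:ℝ) + Bc)*ε := by nlinarith
      have h2 : (m k1 k2 : ℝ) ≤ ((k3 + Bc : ℤ):ℝ) := by
        push_cast
        exact le_of_mul_le_mul_right hr hε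
      have h3 : m k1 k2 ≤ k3 + Bc := by exact_mod_cast h2
      omega
    refine Finset.mem_coe.mpr (Finset.mem_biUnion.mpr ⟨k1, hk1I,
      Finset.mem_biUnion.mpr ⟨k2, hk2I, ?_⟩⟩)
    exact Finset.mem_product.mpr ⟨Finset.mem_singleton_self k1,
      Finset.mem_product.mpr ⟨Finset.mem_singleton_self k2, Finset.mem_Icc.mpr ⟨hlb, hub⟩⟩⟩
  have hfin : {k : ℤ × ℤ × ℤ | (cube ε k ∩ graphOn f E).Nonempty}.Finite :=
    Set.Finite.subset (Finset.finite_toSet T) hsubT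
  refine ⟨hfin, ?_⟩
  have hncard : Ncubes (graphOn f E) ε ≤ T.card := by
    rw [Ncubes, ← Set.ncard_coe_finset T]
    exact Set.ncard_le_ncard hsubT (Finset.finite_toSet T)
  have hcard1 : T.card ≤ I1.card * (I1.card * (2*Bc+1).toNat) := by
    calc T.card ≤ ∑ a ∈ I1, (I1.biUnion
        (fun b => {a} ×ˢ ({b} ×ˢ Finset.Icc (m a b - Bc) (m a b + Bc)))).card :=
          Finset.card_biUnion_le
    _ ≤ ∑ _a ∈ I1, (I1.card * (2*Bc+1).toNat) := by
        refine Finset.sum_le_sum fun a _ => ?_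
        calc (I1.biUnion
            (fun b => {a} ×ˢ ({b} ×ˢ Finset.Icc (m a b - Bc) (m a b + Bc)))).card
            ≤ ∑ b ∈ I1, ({a} ×ˢ ({b} ×ˢ Finset.Icc (m a b - Bc) (m a b + Bc))).card :=
              Finset.card_biUnion_le
          _ ≤ ∑ _b ∈ I1, (2*Bc+1).toNat := by
              refine Finset.sum_le_sum fun b _ => ?_
              rw [Finset.card_product, Finset.card_product, Finset.card_singleton,
                Finset.card_singleton, Int.card_Icc, one_mul, one_mul]
              apply le_of_eq
              congr 1
              ring
          _ = I1.card * (2*Bc+1).toNat := by rw [Finset.sum_const, smul_eq_mul]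
    _ = I1.card * (I1.card * (2*Bc+1).toNat) := by rw [Finset.sum_const, smul_eq_mul]
  have hceil1 : (1:ℤ) ≤ ⌈1/ε⌉ := by
    have h1 : (1:ℝ) ≤ 1/ε := by rw [le_div_iff₀ hε]; linarith
    have : (1:ℝ) ≤ (⌈1/ε⌉:ℝ) := h1.trans (Int.le_ceil _)
    exact_mod_cast this
  have hI1c : (I1.card : ℝ) ≤ 4/ε := by
    rw [hI1, Int.card_Icc, toNat_cast_real (by omega)]
    push_cast
    have h2 : (⌈1/ε⌉:ℝ) < 1/ε + 1 := Int.ceil_lt_add_one _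
    have h3 : 1/ε * ε = 1 := one_div_mul_cancel (ne_of_gt hε)
    rw [le_div_iff₀ hε]
    nlinarith
  have hBcnn : (0:ℤ) ≤ Bc := by
    have : (0:ℝ) ≤ (Bc:ℝ) := by linarith
    exact_mod_cast this
  have hBcc : ((2*Bc+1).toNat : ℝ) ≤ 4*L+5 := by
    rw [toNat_cast_real (by omega)]
    have h2 : (⌈2*L⌉:ℝ) < 2*L + 1 := Int.ceil_lt_add_one _
    rw [hBcdef]
    push_cast
    linarith
  have hI1nn : (0:ℝ) ≤ (I1.card : ℝ) := Nat.cast_nonneg _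
  calc (Ncubes (graphOn f E) ε : ℝ) ≤ (T.card : ℝ) := by exact_mod_cast hncard
    _ ≤ (I1.card : ℝ) * ((I1.card :ℝ) * ((2*Bc+1).toNat : ℝ)) := by exact_mod_cast hcard1
    _ ≤ (4/ε) * ((4/ε) * (4*L+5)) := by
        have h4 : (0:ℝ) ≤ 4/ε := by positivity
        refine mul_le_mul hI1c (mul_le_mul hI1c hBcc (Nat.cast_nonneg _) h4)
          (mul_nonneg hI1nn (Nat.cast_nonneg _)) h4
    _ = 16 * (4*L+5) / ε^2 := by
        field_simp
        ring

lemma base_mem {x0 δ ε : ℝ} (hδ : 0 < δ) (hε : 0 < ε) {a : ℤ}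
    (h1 : ⌈x0/ε⌉ ≤ a) (h2 : a ≤ ⌈x0/ε⌉ + ⌊δ/(2*ε)⌋ - 1) : (a:ℝ)*ε ∈ Icc x0 (x0+δ) := by
  constructor
  · have h3 : x0/ε ≤ (a:ℝ) := (Int.le_ceil _).trans (by exact_mod_cast h1)
    rwa [div_le_iff₀ hε] at h3
  · have h3 : (a:ℝ) ≤ (⌈x0/ε⌉:ℝ) + (⌊δ/(2*ε)⌋:ℝ) - 1 := by
      have : ((⌈x0/ε⌉ + ⌊δ/(2*ε)⌋ - 1 : ℤ):ℝ) = (⌈x0/ε⌉:ℝ) + (⌊δ/(2*ε)⌋:ℝ) - 1 := by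
        push_cast; ring
      rw [← this]
      exact_mod_cast h2
    have h4 : (⌈x0/ε⌉:ℝ) < x0/ε + 1 := Int.ceil_lt_add_one _
    have h5 : (⌊δ/(2*ε)⌋:ℝ) ≤ δ/(2*ε) := Int.floor_le _
    have h6 : (a:ℝ) ≤ x0/ε + δ/(2*ε) := by linarith
    have h7 : (a:ℝ)*ε ≤ (x0/ε + δ/(2*ε))*ε := mul_le_mul_of_nonneg_right h6 hε.le
    have h8 : (x0/ε + δ/(2*ε))*ε = x0 + δ/2 := by field_simp
    linarith

lemma kset_lower {f : ℝ × ℝ → ℝ} {x0 y0 δ : ℝ} (hδ : 0 < δ)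
    {ε : ℝ} (hε : 0 < ε) (hεδ : ε ≤ δ/4)
    (hfin : {k : ℤ × ℤ × ℤ |
      (cube ε k ∩ graphOn f (Icc x0 (x0+δ) ×ˢ Icc y0 (y0+δ))).Nonempty}.Finite) :
    (δ/(4*ε))^2 ≤ (Ncubes (graphOn f (Icc x0 (x0+δ) ×ˢ Icc y0 (y0+δ))) ε : ℝ) := by
  classical
  set E := Icc x0 (x0+δ) ×ˢ Icc y0 (y0+δ) with hE
  set a1 : ℤ := ⌈x0/ε⌉ with ha1
  set b1 : ℤ := ⌈y0/ε⌉ with hb1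
  set M : ℤ := ⌊δ/(2*ε)⌋ with hM
  have hδ4 : 1 ≤ δ/(4*ε) := by rw [le_div_iff₀ (by positivity)]; linarith
  have hM2 : δ/(2*ε) - 1 < (M:ℝ) := Int.sub_one_lt_floor _
  have hMb : δ/(4*ε) ≤ (M:ℝ) := by
    have he : δ/(2*ε) = 2 * (δ/(4*ε)) := by ring
    linarith
  have hM0 : (0:ℤ) ≤ M := by
    have : (0:ℝ) ≤ (M:ℝ) := by linarith
    exact_mod_cast this
  set F : Finset (ℤ × ℤ) := Finset.Icc a1 (a1+M-1) ×ˢ Finset.Icc b1 (b1+M-1) with hF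
  set ψ : ℤ × ℤ → ℤ × ℤ × ℤ :=
    fun ab => (ab.1, ab.2, ⌊f ((ab.1:ℝ)*ε, (ab.2:ℝ)*ε)/ε⌋) with hψ
  have hmaps : ∀ ab ∈ F, ψ ab ∈ hfin.toFinset := by
    rintro ⟨a, b⟩ hab
    rw [Set.Finite.mem_toFinset]
    obtain ⟨h1, h2⟩ := Finset.mem_product.mp hab
    rw [Finset.mem_Icc] at h1 h2
    have hpE : (((a:ℝ)*ε, (b:ℝ)*ε) : ℝ × ℝ) ∈ E :=
      ⟨base_mem hδ hε h1.1 h1.2, base_mem hδ hε h2.1 h2.2⟩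
    have hf1 : (⌊f ((a:ℝ)*ε, (b:ℝ)*ε)/ε⌋:ℝ)*ε ≤ f ((a:ℝ)*ε, (b:ℝ)*ε) := by
      have h := Int.floor_le (f ((a:ℝ)*ε, (b:ℝ)*ε) / ε)
      rwa [le_div_iff₀ hε] at h
    have hf2 : f ((a:ℝ)*ε, (b:ℝ)*ε) ≤ ((⌊f ((a:ℝ)*ε, (b:ℝ)*ε)/ε⌋:ℝ)+1)*ε := by
      have h := Int.lt_floor_add_one (f ((a:ℝ)*ε, (b:ℝ)*ε) / ε)
      rw [div_lt_iff₀ hε] at h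
      exact h.le
    have hψab : ψ (a, b) = (a, b, ⌊f ((a:ℝ)*ε, (b:ℝ)*ε)/ε⌋) := by rw [hψ]
    rw [hψab]
    refine ⟨((a:ℝ)*ε, (b:ℝ)*ε, f ((a:ℝ)*ε, (b:ℝ)*ε)), ?_, ⟨((a:ℝ)*ε, (b:ℝ)*ε), hpE, rfl⟩⟩
    simp only [cube, Set.mem_prod, Set.mem_Icc]
    refine ⟨⟨le_refl _, by nlinarith⟩, ⟨le_refl _, by nlinarith⟩, hf1, hf2⟩
  have hinj : Set.InjOn ψ ↑F := by
    rintro ⟨a, b⟩ _ ⟨a', b'⟩ _ h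
    simp only [hψ, Prod.mk.injEq] at h
    exact Prod.ext_iff.mpr ⟨h.1, h.2.1⟩
  have hcard : F.card ≤ Ncubes (graphOn f E) ε := by
    rw [Ncubes, Set.ncard_eq_toFinset_card _ hfin]
    exact Finset.card_le_card_of_injOn ψ hmaps hinj
  have hFcard : (F.card : ℝ) = ((M.toNat : ℕ):ℝ)^2 := by
    rw [hF, Finset.card_product, Int.card_Icc, Int.card_Icc,
      show a1+M-1+1-a1 = M from by ring, show b1+M-1+1-b1 = M from by ring]
    push_cast
    ring
  have hMr : δ/(4*ε) ≤ ((M.toNat : ℕ):ℝ) := by rw [toNat_cast_real hM0]; exact hMb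
  calc (δ/(4*ε))^2 ≤ ((M.toNat : ℕ):ℝ)^2 := by
        have h0 : (0:ℝ) ≤ δ/(4*ε) := by positivity
        exact pow_le_pow_left₀ h0 hMr 2
    _ = (F.card : ℝ) := hFcard.symm
    _ ≤ (Ncubes (graphOn f E) ε : ℝ) := by exact_mod_cast hcard

lemma hasBoxDim_lip {f : ℝ × ℝ → ℝ} {x0 y0 δ L : ℝ} (hδ : 0 < δ) (hL : 0 ≤ L)
    (hsq : Icc x0 (x0+δ) ×ˢ Icc y0 (y0+δ) ⊆ sq)
    (hlip : ∀ p ∈ Icc x0 (x0+δ) ×ˢ Icc y0 (y0+δ), ∀ q ∈ Icc x0 (x0+δ) ×ˢ Icc y0 (y0+δ),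
      |f p - f q| ≤ L * (|p.1 - q.1| + |p.2 - q.2|)) :
    HasBoxDim (graphOn f (Icc x0 (x0+δ) ×ˢ Icc y0 (y0+δ))) 2 := by
  set E := Icc x0 (x0+δ) ×ˢ Icc y0 (y0+δ) with hE
  set C : ℝ := 16*(4*L+5) with hC
  have hCpos : (0:ℝ) < C := by rw [hC]; nlinarith
  set c : ℝ := δ^2/16 with hcd
  have hcpos : (0:ℝ) < c := by rw [hcd]; positivity
  set ε₀ : ℝ := min (δ/4) (1/2) with hε₀
  have hε₀pos : 0 < ε₀ := lt_min (by positivity) (by norm_num)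
  have key : ∀ ε ∈ Ioo (0:ℝ) ε₀,
      2 + Real.log c / Real.log (1/ε) ≤ boxRatio (graphOn f E) ε ∧
      boxRatio (graphOn f E) ε ≤ 2 + Real.log C / Real.log (1/ε) := by
    intro ε hmem
    have hεpos : 0 < ε := hmem.1
    have hεδ : ε ≤ δ/4 := hmem.2.le.trans (min_le_left _ _)
    have hεhalf : ε ≤ 1/2 := hmem.2.le.trans (min_le_right _ _)
    have hε1 : ε ≤ 1 := by linarith
    have hεlt1 : ε < 1 := by linarith
    obtain ⟨hfin, hub⟩ := kset_upper hδ hL hsq hlip hεpos hε1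
    have hlb := kset_lower hδ hεpos hεδ hfin
    have heq : (δ/(4*ε))^2 = c/ε^2 := by rw [hcd]; field_simp; ring
    rw [heq] at hlb
    have hNpos : (0:ℝ) < ((Ncubes (graphOn f E) ε : ℕ) : ℝ) :=
      lt_of_lt_of_le (by positivity) hlb
    have hlog1 : 0 < Real.log (1/ε) := Real.log_pos (one_lt_one_div hεpos hεlt1)
    have hlogc : Real.log (c/ε^2) = Real.log c + 2*Real.log (1/ε) := by
      rw [show c/ε^2 = c * (1/ε)^2 from by field_simp, Real.log_mul hcpos.ne'
        (by positivity), Real.log_pow]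
      push_cast
      ring
    have hlogC : Real.log (C/ε^2) = Real.log C + 2*Real.log (1/ε) := by
      rw [show C/ε^2 = C * (1/ε)^2 from by field_simp, Real.log_mul hCpos.ne'
        (by positivity), Real.log_pow]
      push_cast
      ring
    constructor
    · have h1 : Real.log (c/ε^2) ≤ Real.log (Ncubes (graphOn f E) ε) :=
        Real.log_le_log (by positivity) hlb
      rw [hlogc] at h1
      rw [boxRatio]
      rw [show (2:ℝ) + Real.log c / Real.log (1/ε)
          = (Real.log c + 2*Real.log (1/ε)) / Real.log (1/ε) from by
        field_simp; ring]
      exact (div_le_div_iff_of_pos_right hlog1).mpr h1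
    · have h1 : Real.log (Ncubes (graphOn f E) ε) ≤ Real.log (C/ε^2) :=
        Real.log_le_log hNpos hub
      rw [hlogC] at h1
      rw [boxRatio]
      rw [show (2:ℝ) + Real.log C / Real.log (1/ε)
          = (Real.log C + 2*Real.log (1/ε)) / Real.log (1/ε) from by
        field_simp; ring]
      exact (div_le_div_iff_of_pos_right hlog1).mpr h1
  have hlogTop : Tendsto (fun ε : ℝ => Real.log (1/ε)) (nhdsWithin 0 (Ioi 0)) atTop := by
    have h := Real.tendsto_log_atTop.comp (tendsto_inv_nhdsGT_zero (𝕜 := ℝ))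
    simpa only [Function.comp_def, one_div] using h
  have hlow : Tendsto (fun ε : ℝ => 2 + Real.log c / Real.log (1/ε))
      (nhdsWithin 0 (Ioi 0)) (nhds 2) := by
    have h1 : Tendsto (fun ε : ℝ => Real.log c / Real.log (1/ε))
        (nhdsWithin 0 (Ioi 0)) (nhds 0) := Tendsto.div_atTop tendsto_const_nhds hlogTop
    have h2 := h1.const_add (2:ℝ)
    simpa using h2
  have hup : Tendsto (fun ε : ℝ => 2 + Real.log C / Real.log (1/ε))
      (nhdsWithin 0 (Ioi 0)) (nhds 2) := by
    have h1 : Tendsto (fun ε : ℝ => Real.log C / Real.log (1/ε))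
        (nhdsWithin 0 (Ioi 0)) (nhds 0) := Tendsto.div_atTop tendsto_const_nhds hlogTop
    have h2 := h1.const_add (2:ℝ)
    simpa using h2
  refine tendsto_of_tendsto_of_tendsto_of_le_of_le' hlow hup ?_ ?_
  · exact Filter.eventually_of_mem (Ioo_mem_nhdsGT_of_mem ⟨le_refl 0, hε₀pos⟩)
      (fun ε hε => (key ε hε).1)
  · exact Filter.eventually_of_mem (Ioo_mem_nhdsGT_of_mem ⟨le_refl 0, hε₀pos⟩)
      (fun ε hε => (key ε hε).2)

end RFIS
open RFIS in
/-- **Lemma 4.7 (2)–(3).**  If `(i,j)` is degenerate, then (a) there is `C > 0` with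
`O(f, n, D_{ij}) ≤ C Kⁿ` for all `n ≥ 1`, and (b) the box dimension of `Γ f|_{D_{ij}}`
exists and equals 2. -/
theorem degenerate_pair_boxDim_two (st : Setup) (i j : ℕ)
    (hi1 : 1 ≤ i) (hiN : i ≤ st.N) (hj1 : 1 ≤ j) (hjN : j ≤ st.N)
    (hdeg : DegenPair st i j) :
    (∃ C : ℝ, 0 < C ∧ ∀ n : ℕ, 1 ≤ n →
      OscSum st.f st.N st.K n (Dij st.N i j) ≤ C * (st.K : ℝ) ^ n) ∧
    HasBoxDim (graphOn st.f (Dij st.N i j)) 2 := by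
  have hN0 := st_N0 st
  have hK0 := st_K0 st
  have hfh := f_eq_h_on_deg st hi1 hiN hj1 hjN hdeg
  have hδ : (0:ℝ) < 1/(st.N:ℝ) := by
    have : (0:ℝ) < (st.N:ℝ) := by exact_mod_cast hN0
    positivity
  have hDij : Dij st.N i j = Icc (xg st.N (i-1)) (xg st.N (i-1) + 1/(st.N:ℝ)) ×ˢ
      Icc (xg st.N (j-1)) (xg st.N (j-1) + 1/(st.N:ℝ)) := by
    rw [Dij_eq]
    have e1 : xg st.N i = xg st.N (i-1) + 1/(st.N:ℝ) := by
      rw [xg_pred hN0 hi1]; ring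
    have e2 : xg st.N j = xg st.N (j-1) + 1/(st.N:ℝ) := by
      rw [xg_pred hN0 hj1]; ring
    rw [e1, e2]
  have hsq : Dij st.N i j ⊆ sq := Dij_subset_sq hN0 hiN hjN
  obtain ⟨L, hL0, hLh⟩ := bilin_lip hsq (st.hhbil i j hi1 hiN hj1 hjN)
  have hlipf : ∀ p ∈ Dij st.N i j, ∀ q ∈ Dij st.N i j,
      |st.f p - st.f q| ≤ L * (|p.1 - q.1| + |p.2 - q.2|) := by
    intro p hp q hq
    rw [hfh p hp, hfh q hq]
    exact hLh p hp q hq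
  have hNr : (0:ℝ) ≤ (st.N:ℝ) := Nat.cast_nonneg _
  constructor
  · refine ⟨2*L*(st.N:ℝ) + 1, ?_, fun n _ => oscSum_le hN0 hK0 hL0 hlipf n⟩
    have h1 : (0:ℝ) ≤ 2*L*(st.N:ℝ) := mul_nonneg (mul_nonneg (by norm_num) hL0) hNr
    linarith
  · rw [hDij]
    rw [hDij] at hsq hlipf
    exact hasBoxDim_lip hδ hL0 hsq hlipf
end
end

section
/- Let G be a q×q nonnegative real matrix, let ξ∈ℝ^q be a strictly positive vector with Gξ = ρξ for some ρ > K > 1 (K real), and let C₁, C₂ > 0 and n₀ ≥ 1. Suppose a sequence of vectors a(n)∈ℝ^q satisfies a_k(n+1) ≥ Σ_ℓ G_{kℓ} a_ℓ(n) − C₁ ξ_k Kⁿ for all k and all n ≥ n₀, and a_k(n₀) ≥ C₂ ρ^{n₀} ξ_k + (C₁ K^{n₀}/(ρ−K)) ξ_k for all k. Then for all n ≥ n₀ and all k, a_k(n) ≥ C₂ ρⁿ ξ_k + (C₁ Kⁿ/(ρ−K)) ξ_k; in particular a_k(n) ≥ C₂ ρⁿ ξ_k. -/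
/-- Recursive lower-bound estimate from the proof of the box-dimension theorem for
bilinear recurrent fractal interpolation surfaces.  Let `G` be a `q × q` nonnegative
matrix, `ξ` a strictly positive eigenvector with `G ξ = ρ ξ`, `ρ > K > 1`, and suppose
`a_k(n+1) ≥ Σ_l G_{kl} a_l(n) − C₁ ξ_k Kⁿ` for `n ≥ n₀` with the initial bound
`a_k(n₀) ≥ C₂ ρ^{n₀} ξ_k + (C₁ K^{n₀}/(ρ − K)) ξ_k`.  Then for all `n ≥ n₀` and all `k`,
`a_k(n) ≥ C₂ ρⁿ ξ_k + (C₁ Kⁿ/(ρ − K)) ξ_k`; in particular `a_k(n) ≥ C₂ ρⁿ ξ_k`. -/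
theorem recursive_lower_bound (q : ℕ) (G : Matrix (Fin q) (Fin q) ℝ)
    (hG : ∀ k l, 0 ≤ G k l) (ξ : Fin q → ℝ) (hξ : ∀ k, 0 < ξ k)
    (ρ K : ℝ) (hK1 : 1 < K) (hρK : K < ρ)
    (heig : ∀ k, ∑ l, G k l * ξ l = ρ * ξ k)
    (C₁ C₂ : ℝ) (hC₁ : 0 < C₁) (hC₂ : 0 < C₂) (n₀ : ℕ) (hn₀ : 1 ≤ n₀)
    (a : ℕ → Fin q → ℝ)
    (hrec : ∀ k : Fin q, ∀ n : ℕ, n₀ ≤ n →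
      (∑ l, G k l * a n l) - C₁ * ξ k * K ^ n ≤ a (n + 1) k)
    (hinit : ∀ k : Fin q,
      C₂ * ρ ^ n₀ * ξ k + (C₁ * K ^ n₀ / (ρ - K)) * ξ k ≤ a n₀ k) :
    ∀ n : ℕ, n₀ ≤ n → ∀ k : Fin q,
      C₂ * ρ ^ n * ξ k + (C₁ * K ^ n / (ρ - K)) * ξ k ≤ a n k ∧
      C₂ * ρ ^ n * ξ k ≤ a n k := by
  have hρK' : 0 < ρ - K := sub_pos.mpr hρK
  have hK0 : (0:ℝ) < K := lt_trans one_pos hK1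
  have hmain : ∀ n : ℕ, n₀ ≤ n → ∀ k : Fin q,
      C₂ * ρ ^ n * ξ k + (C₁ * K ^ n / (ρ - K)) * ξ k ≤ a n k := by
    intro n hn
    induction n, hn using Nat.le_induction with
    | base => exact hinit
    | succ n hn ih =>
      intro k
      have h1 : ∑ l, G k l * (C₂ * ρ ^ n * ξ l + (C₁ * K ^ n / (ρ - K)) * ξ l)
          ≤ ∑ l, G k l * a n l := by
        apply Finset.sum_le_sum
        intro l _
        exact mul_le_mul_of_nonneg_left (ih l) (hG k l)
      have h2 : ∑ l, G k l * (C₂ * ρ ^ n * ξ l + (C₁ * K ^ n / (ρ - K)) * ξ l)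
          = (C₂ * ρ ^ n + C₁ * K ^ n / (ρ - K)) * (ρ * ξ k) := by
        rw [← heig k, Finset.mul_sum]
        apply Finset.sum_congr rfl
        intro l _
        ring
      have key : C₂ * ρ ^ (n+1) * ξ k + (C₁ * K ^ (n+1) / (ρ - K)) * ξ k
          = (C₂ * ρ ^ n + C₁ * K ^ n / (ρ - K)) * (ρ * ξ k) - C₁ * ξ k * K ^ n := by
        field_simp
        ring
      calc C₂ * ρ ^ (n+1) * ξ k + (C₁ * K ^ (n+1) / (ρ - K)) * ξ k
          = (C₂ * ρ ^ n + C₁ * K ^ n / (ρ - K)) * (ρ * ξ k) - C₁ * ξ k * K ^ n := key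
        _ ≤ (∑ l, G k l * a n l) - C₁ * ξ k * K ^ n := by
            rw [← h2]; linarith
        _ ≤ a (n+1) k := hrec k n hn
  intro n hn k
  refine ⟨hmain n hn k, ?_⟩
  have := hmain n hn k
  have hpos : 0 ≤ (C₁ * K ^ n / (ρ - K)) * ξ k := by
    apply mul_nonneg
    · positivity
    · exact (hξ k).le
  linarith
end

section
/- Let G be a q×q nonnegative real matrix, let η∈ℝ^q be a strictly positive vector with Gη = ρ_i η for some ρ_i ≥ 0, and let ρ₀ ≥ ρ_i, δ > 0, C₁ > 0, C₂ > 0. Suppose a sequence of vectors a(n)∈ℝ^q satisfies a_k(n+1) ≤ Σ_ℓ G_{kℓ} a_ℓ(n) + C₁ η_k ρ₀ⁿ for all k and all n ≥ 1, and a_k(1) ≤ C₂ ρ_i η_k + C₁ δ^{-1} (ρ₀+δ) η_k for all k. Then for all n ≥ 1 and all k, a_k(n) ≤ C₂ ρ_iⁿ η_k + C₁ δ^{-1} (ρ₀+δ)ⁿ η_k. -/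
/-- Recursive upper-bound estimate from the proof of the box-dimension theorem for
bilinear recurrent fractal interpolation surfaces.  Let `G` be a `q × q` nonnegative
matrix, `η` a strictly positive eigenvector with `G η = ρᵢ η`, `ρ₀ ≥ ρᵢ ≥ 0`, `δ > 0`,
and suppose `a_k(n+1) ≤ Σ_l G_{kl} a_l(n) + C₁ η_k ρ₀ⁿ` for all `n ≥ 1` with the initial
bound `a_k(1) ≤ C₂ ρᵢ η_k + C₁ δ⁻¹ (ρ₀ + δ) η_k`.  Then for all `n ≥ 1` and all `k`,
`a_k(n) ≤ C₂ ρᵢⁿ η_k + C₁ δ⁻¹ (ρ₀ + δ)ⁿ η_k`. -/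
theorem recursive_upper_bound (q : ℕ) (G : Matrix (Fin q) (Fin q) ℝ)
    (hG : ∀ k l, 0 ≤ G k l) (η : Fin q → ℝ) (hη : ∀ k, 0 < η k)
    (ρi ρ₀ δ : ℝ) (hρi : 0 ≤ ρi) (hρ₀ : ρi ≤ ρ₀) (hδ : 0 < δ)
    (heig : ∀ k, ∑ l, G k l * η l = ρi * η k)
    (C₁ C₂ : ℝ) (hC₁ : 0 < C₁) (hC₂ : 0 < C₂)
    (a : ℕ → Fin q → ℝ)
    (hrec : ∀ k : Fin q, ∀ n : ℕ, 1 ≤ n →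
      a (n + 1) k ≤ (∑ l, G k l * a n l) + C₁ * η k * ρ₀ ^ n)
    (hinit : ∀ k : Fin q, a 1 k ≤ C₂ * ρi * η k + C₁ * δ⁻¹ * (ρ₀ + δ) * η k) :
    ∀ n : ℕ, 1 ≤ n → ∀ k : Fin q,
      a n k ≤ C₂ * ρi ^ n * η k + C₁ * δ⁻¹ * (ρ₀ + δ) ^ n * η k := by
  intro n
  induction n with
  | zero => intro h; omega
  | succ m ih =>
    intro _ k
    rcases Nat.eq_zero_or_pos m with hm | hm
    · subst hm; simpa using hinit k
    have hih := ih hm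
    have h1 : a (m + 1) k ≤ (∑ l, G k l * a m l) + C₁ * η k * ρ₀ ^ m :=
      hrec k m hm
    have h2 : ∑ l, G k l * a m l ≤
        ∑ l, G k l * (C₂ * ρi ^ m * η l + C₁ * δ⁻¹ * (ρ₀ + δ) ^ m * η l) := by
      apply Finset.sum_le_sum
      intro l _
      exact mul_le_mul_of_nonneg_left (hih l) (hG k l)
    have h3 : ∑ l, G k l * (C₂ * ρi ^ m * η l + C₁ * δ⁻¹ * (ρ₀ + δ) ^ m * η l)
        = C₂ * ρi ^ m * (ρi * η k) + C₁ * δ⁻¹ * (ρ₀ + δ) ^ m * (ρi * η k) := by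
      rw [← heig k]
      rw [Finset.mul_sum, Finset.mul_sum, ← Finset.sum_add_distrib]
      apply Finset.sum_congr rfl
      intro l _; ring
    have hρ0 : (0:ℝ) ≤ ρ₀ := le_trans hρi hρ₀
    have hpow : ρ₀ ^ m ≤ (ρ₀ + δ) ^ m :=
      pow_le_pow_left₀ hρ0 (by linarith) m
    have hpow2 : ρi ^ m ≤ (ρ₀ + δ) ^ m :=
      pow_le_pow_left₀ hρi (by linarith) m
    have key : C₁ * δ⁻¹ * (ρ₀ + δ) ^ m * (ρi * η k) + C₁ * η k * ρ₀ ^ m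
        ≤ C₁ * δ⁻¹ * (ρ₀ + δ) ^ (m + 1) * η k := by
      have hηk := (hη k).le
      have e1 : C₁ * δ⁻¹ * (ρ₀ + δ) ^ m * (ρi * η k)
          ≤ C₁ * δ⁻¹ * (ρ₀ + δ) ^ m * (ρ₀ * η k) := by
        apply mul_le_mul_of_nonneg_left
        · exact mul_le_mul_of_nonneg_right hρ₀ hηk
        · positivity
      have e2 : C₁ * η k * ρ₀ ^ m ≤ C₁ * η k * (ρ₀ + δ) ^ m :=
        mul_le_mul_of_nonneg_left hpow (by positivity)
      have e3 : C₁ * δ⁻¹ * (ρ₀ + δ) ^ m * (ρ₀ * η k) + C₁ * η k * (ρ₀ + δ) ^ m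
          = C₁ * δ⁻¹ * (ρ₀ + δ) ^ (m + 1) * η k := by
        field_simp
        ring
      linarith
    have hfirst : C₂ * ρi ^ m * (ρi * η k) = C₂ * ρi ^ (m + 1) * η k := by ring
    calc a (m + 1) k ≤ (∑ l, G k l * a m l) + C₁ * η k * ρ₀ ^ m := h1
      _ ≤ (C₂ * ρi ^ m * (ρi * η k) + C₁ * δ⁻¹ * (ρ₀ + δ) ^ m * (ρi * η k))
          + C₁ * η k * ρ₀ ^ m := by rw [← h3]; linarith
      _ ≤ C₂ * ρi ^ (m + 1) * η k + C₁ * δ⁻¹ * (ρ₀ + δ) ^ (m + 1) * η k := by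
          rw [← hfirst]; linarith
end
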